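/- arXiv:1111.3011 — 8 statements merged into one kernel-verified Lean document; each statement's English description precedes it below -/
import Mathlib

section
/- Let J = diag(-1, 1, 1) on ℂ³ and define [x,y] = (Jx,y). Let A₁ = [[0, 100i, 0],[100i, 0, 0],[0, 0, 0]] and A₂ = [[0, 100i, 0],[100i, 400, 20],[0, 20, 1]]. Then A₁ and A₂ are selfadjoint with respect to [·,·], they agree on the two linearly independent vectors (1,0,0) and (0,1,-20), the spectrum of A₁ equals {100i, -100i, 0}, and A₂ has three distinct positive real eigenvalues. -/
open Matrix Complex

private lemma mem_spec_iff (A : Matrix (Fin 3) (Fin 3) ℂ) (z : ℂ) :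
    z ∈ spectrum ℂ A ↔ ((z • (1:Matrix (Fin 3) (Fin 3) ℂ)) - A).det = 0 := by
  rw [spectrum.mem_iff, Matrix.isUnit_iff_isUnit_det, isUnit_iff_ne_zero, not_ne_iff]
  simp [Algebra.algebraMap_eq_smul_one]

private lemma roots_exist : ∃ μ₁ μ₂ μ₃ : ℝ,
    μ₁ ∈ Set.Icc (1:ℝ) 2 ∧ μ₂ ∈ Set.Icc (2:ℝ) 30 ∧ μ₃ ∈ Set.Icc (30:ℝ) 400 ∧
    (μ₁^3 - 401*μ₁^2 + 10000*μ₁ - 10000 = 0) ∧ (μ₂^3 - 401*μ₂^2 + 10000*μ₂ - 10000 = 0) ∧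
    (μ₃^3 - 401*μ₃^2 + 10000*μ₃ - 10000 = 0) := by
  set f : ℝ → ℝ := fun x => x^3 - 401*x^2 + 10000*x - 10000 with hf
  have hc : Continuous f := by fun_prop
  have h1 : (0:ℝ) ∈ Set.Icc (f 1) (f 2) := by norm_num [hf]
  have h2 : (0:ℝ) ∈ Set.Icc (f 30) (f 2) := by norm_num [hf]
  have h3 : (0:ℝ) ∈ Set.Icc (f 30) (f 400) := by norm_num [hf]
  obtain ⟨μ₁, hm1, he1⟩ := intermediate_value_Icc (by norm_num) hc.continuousOn h1
  obtain ⟨μ₂, hm2, he2⟩ := intermediate_value_Icc' (by norm_num) hc.continuousOn h2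
  obtain ⟨μ₃, hm3, he3⟩ := intermediate_value_Icc (by norm_num) hc.continuousOn h3
  exact ⟨μ₁, μ₂, μ₃, hm1, hm2, hm3, he1, he2, he3⟩

private lemma vieta (μ₁ μ₂ μ₃ : ℝ)
    (h₁ : μ₁^3 - 401*μ₁^2 + 10000*μ₁ - 10000 = 0)
    (h₂ : μ₂^3 - 401*μ₂^2 + 10000*μ₂ - 10000 = 0)
    (h₃ : μ₃^3 - 401*μ₃^2 + 10000*μ₃ - 10000 = 0)
    (d12 : μ₁ ≠ μ₂) (d13 : μ₁ ≠ μ₃) (d23 : μ₂ ≠ μ₃) :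
    μ₁+μ₂+μ₃ = 401 ∧ μ₁*μ₂+μ₁*μ₃+μ₂*μ₃ = 10000 ∧ μ₁*μ₂*μ₃ = 10000 := by
  have hs : μ₁+μ₂+μ₃ = 401 := by
    have key : (μ₁+μ₂+μ₃-401) * ((μ₁-μ₂)*(μ₁-μ₃)*(μ₂-μ₃)) = 0 := by
      linear_combination (μ₂-μ₃)*h₁ - (μ₁-μ₃)*h₂ + (μ₁-μ₂)*h₃
    rcases mul_eq_zero.1 key with h | h
    · linarith
    · exact absurd h (by simp [sub_eq_zero, mul_eq_zero, d12, d13, d23])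
  have he2 : μ₁*μ₂+μ₁*μ₃+μ₂*μ₃ = 10000 := by
    have key : (μ₁*μ₂+μ₁*μ₃+μ₂*μ₃-10000) * (μ₁-μ₂) = 0 := by
      linear_combination h₂ - h₁ + (μ₁-μ₂)*(μ₁+μ₂)*hs
    rcases mul_eq_zero.1 key with h | h
    · linarith
    · exact absurd (sub_eq_zero.1 h) d12
  exact ⟨hs, he2, by linear_combination h₁ - μ₁^2*hs + μ₁*he2⟩

theorem stmt1 :
    let J : Matrix (Fin 3) (Fin 3) ℂ := !![-1, 0, 0; 0, 1, 0; 0, 0, 1]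
    let A₁ : Matrix (Fin 3) (Fin 3) ℂ := !![0, 100*I, 0; 100*I, 0, 0; 0, 0, 0]
    let A₂ : Matrix (Fin 3) (Fin 3) ℂ := !![0, 100*I, 0; 100*I, 400, 20; 0, 20, 1]
    J * A₁ = A₁ᴴ * J ∧ J * A₂ = A₂ᴴ * J ∧
    A₁ *ᵥ ![1, 0, 0] = A₂ *ᵥ ![1, 0, 0] ∧
    A₁ *ᵥ ![0, 1, -20] = A₂ *ᵥ ![0, 1, -20] ∧
    LinearIndependent ℂ ![(![1, 0, 0] : Fin 3 → ℂ), ![0, 1, -20]] ∧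
    spectrum ℂ A₁ = {100*I, -(100*I), 0} ∧
    (∃ μ₁ μ₂ μ₃ : ℝ, 0 < μ₁ ∧ 0 < μ₂ ∧ 0 < μ₃ ∧
      μ₁ ≠ μ₂ ∧ μ₁ ≠ μ₃ ∧ μ₂ ≠ μ₃ ∧
      spectrum ℂ A₂ = {(μ₁ : ℂ), (μ₂ : ℂ), (μ₃ : ℂ)}) := by
  intro J A₁ A₂
  refine ⟨?_, ?_, ?_, ?_, ?_, ?_, ?_⟩
  · ext i j
    fin_cases i <;> fin_cases j <;>
      simp [J, A₁, Matrix.mul_apply, Fin.sum_univ_three, Complex.ext_iff,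
        Matrix.vecHead, Matrix.vecTail]
  · ext i j
    fin_cases i <;> fin_cases j <;>
      simp [J, A₂, Matrix.mul_apply, Fin.sum_univ_three, Complex.ext_iff,
        Matrix.vecHead, Matrix.vecTail]
  · funext i
    fin_cases i <;>
      simp [A₁, A₂, Matrix.mulVec, dotProduct, Fin.sum_univ_three]
  · funext i
    fin_cases i <;>
      (simp [A₁, A₂, Matrix.mulVec, dotProduct, Fin.sum_univ_three]; try ring)
  · rw [LinearIndependent.pair_iff]
    intro s t h
    have h0 := congrFun h 0
    have h1 := congrFun h 1
    simp at h0 h1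
    exact ⟨h0, h1⟩
  · ext z
    rw [mem_spec_iff]
    have hdet : ((z • (1:Matrix (Fin 3) (Fin 3) ℂ)) - A₁).det
        = z * (z - 100*I) * (z + 100*I) := by
      have expand : ((z • (1:Matrix (Fin 3) (Fin 3) ℂ)) - A₁).det = z^3 + 10000*z := by
        simp [A₁, Matrix.det_fin_three, Matrix.one_apply, Matrix.vecHead, Matrix.vecTail]
        ring_nf
        rw [Complex.I_sq]
        ring
      rw [expand]
      linear_combination 10000*z*Complex.I_sq
    rw [hdet]
    simp only [Set.mem_insert_iff, Set.mem_singleton_iff, mul_eq_zero]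
    constructor
    · rintro ((h | h) | h)
      · exact Or.inr (Or.inr h)
      · exact Or.inl (by linear_combination h)
      · exact Or.inr (Or.inl (by linear_combination h))
    · rintro (h | h | h)
      · exact Or.inl (Or.inr (by linear_combination h))
      · exact Or.inr (by linear_combination h)
      · exact Or.inl (Or.inl h)
  · obtain ⟨μ₁, μ₂, μ₃, hm1, hm2, hm3, he1, he2, he3⟩ := roots_exist
    have hne2 : (2:ℝ)^3 - 401*2^2 + 10000*2 - 10000 ≠ 0 := by norm_num
    have hne30 : (30:ℝ)^3 - 401*30^2 + 10000*30 - 10000 ≠ 0 := by norm_num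
    have d12 : μ₁ ≠ μ₂ := by
      rcases lt_or_eq_of_le hm1.2 with h | h
      · exact ne_of_lt (lt_of_lt_of_le h hm2.1)
      · exact fun hq => hne2 (h ▸ he1)
    have d23 : μ₂ ≠ μ₃ := by
      rcases lt_or_eq_of_le hm2.2 with h | h
      · exact ne_of_lt (lt_of_lt_of_le h hm3.1)
      · exact fun hq => hne30 (h ▸ he2)
    have d13 : μ₁ ≠ μ₃ := by
      have : μ₁ ≤ 2 := hm1.2
      have : (30:ℝ) ≤ μ₃ := hm3.1
      intro h; linarith [hm1.2, hm3.1]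
    obtain ⟨hs, hp2, hp3⟩ := vieta μ₁ μ₂ μ₃ he1 he2 he3 d12 d13 d23
    refine ⟨μ₁, μ₂, μ₃, by linarith [hm1.1], by linarith [hm2.1], by linarith [hm3.1],
      d12, d13, d23, ?_⟩
    have hsC : (μ₁:ℂ)+μ₂+μ₃ = 401 := by exact_mod_cast congrArg Complex.ofReal hs
    have hp2C : (μ₁:ℂ)*μ₂+(μ₁:ℂ)*μ₃+(μ₂:ℂ)*μ₃ = 10000 := by
      exact_mod_cast congrArg Complex.ofReal hp2
    have hp3C : (μ₁:ℂ)*μ₂*μ₃ = 10000 := by exact_mod_cast congrArg Complex.ofReal hp3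
    ext z
    rw [mem_spec_iff]
    have hdet : ((z • (1:Matrix (Fin 3) (Fin 3) ℂ)) - A₂).det
        = (z - μ₁) * (z - μ₂) * (z - μ₃) := by
      have expand : ((z • (1:Matrix (Fin 3) (Fin 3) ℂ)) - A₂).det
          = z^3 - 401*z^2 + 10000*z - 10000 := by
        simp [A₂, Matrix.det_fin_three, Matrix.one_apply, Matrix.vecHead, Matrix.vecTail]
        ring_nf
        rw [Complex.I_sq]
        ring
      rw [expand]
      linear_combination z^2*hsC - z*hp2C + hp3C
    rw [hdet]
    simp only [Set.mem_insert_iff, Set.mem_singleton_iff, mul_eq_zero, sub_eq_zero]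
    tauto
end

section
/- Let T be a bounded selfadjoint operator on a complex Hilbert space H and let a < b be real numbers. Then the open interval (a, b) is contained in the resolvent set of T if and only if Re⟨(T - a)x, (T - b)x⟩ ≥ 0 for all x ∈ H. -/
/-!
Put `S = (T - a)(T - b) = q(T)` with `q t = (t - a)(t - b)`. Since `T - a` is selfadjoint,
`Re⟪(T - a)x, (T - b)x⟫ = Re⟪S x, x⟫`, so the inner-product condition says `S ≥ 0`. By the
continuous functional calculus `S ≥ 0` iff `q ≥ 0` on the (real) spectrum of `T`, and since
`a < b` the real numbers where `q` is negative are exactly those of `(a, b)`.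
-/

open scoped InnerProductSpace

namespace ContinuousLinearMap

variable {𝕜 E : Type*} [RCLike 𝕜] [NormedAddCommGroup E] [InnerProductSpace 𝕜 E]
  [CompleteSpace E]

lemma re_inner_apply_apply_of_isSelfAdjoint {A : E →L[𝕜] E} (hA : IsSelfAdjoint A)
    (B : E →L[𝕜] E) (x : E) : RCLike.re ⟪A x, B x⟫_𝕜 = RCLike.re ⟪(A * B) x, x⟫_𝕜 := by
  rw [mul_apply_eq_comp, ← inner_conj_symm, RCLike.conj_re]
  exact congrArg _ (hA.isSymmetric (B x) x).symm

lemma nonneg_iff_forall_re_inner_nonneg {S : E →L[𝕜] E} (hS : IsSelfAdjoint S) :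
    0 ≤ S ↔ ∀ x, 0 ≤ RCLike.re ⟪S x, x⟫_𝕜 := by
  rw [nonneg_iff_isPositive, isPositive_def']
  simp [hS, reApplyInnerSelf]

end ContinuousLinearMap

lemma spectrum.algebraMap_mem_resolventSet_iff {R S A : Type*} [CommSemiring R] [CommRing S]
    [Ring A] [Algebra R S] [Algebra R A] [Algebra S A] [IsScalarTower R S A] {a : A} {r : R} :
    algebraMap R S r ∈ resolventSet S a ↔ r ∉ spectrum R a := by
  rw [← spectrum.algebraMap_mem_iff S, spectrum.notMem_iff]
  rfl

lemma Real.notMem_Ioo_iff_nonneg_mul_sub_mul_sub {a b t : ℝ} (hab : a < b) :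
    t ∉ Set.Ioo a b ↔ 0 ≤ (t - a) * (t - b) := by
  rw [Set.mem_Ioo, not_and_or, not_lt, not_lt]
  constructor
  · rintro (h | h) <;> nlinarith
  · intro h
    by_contra! h'
    nlinarith [h'.1, h'.2]

lemma IsSelfAdjoint.cfc_mul_sub_sub {A : Type*} [CStarAlgebra A] {T : A} (hT : IsSelfAdjoint T)
    (a b : ℝ) :
    cfc (fun t : ℝ => (t - a) * (t - b)) T =
      (T - algebraMap ℝ A a) * (T - algebraMap ℝ A b) := by
  rw [cfc_mul .., cfc_sub .., cfc_sub .., cfc_id' .., cfc_const .., cfc_const ..]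

theorem stmt2 {H : Type*} [NormedAddCommGroup H] [InnerProductSpace ℂ H]
    [CompleteSpace H] (T : H →L[ℂ] H) (hT : IsSelfAdjoint T)
    (a b : ℝ) (hab : a < b) :
    (∀ t ∈ Set.Ioo a b, (t : ℂ) ∈ resolventSet ℂ T) ↔
      ∀ x : H, 0 ≤ (⟪T x - (a : ℂ) • x, T x - (b : ℂ) • x⟫_ℂ).re := by
  set S := cfc (fun t : ℝ => (t - a) * (t - b)) T with hS_def
  have hS : IsSelfAdjoint S := cfc_predicate _ _
  have hinner (x : H) :
      (⟪T x - (a : ℂ) • x, T x - (b : ℂ) • x⟫_ℂ).re = RCLike.re ⟪S x, x⟫_ℂ := by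
    rw [hS_def, hT.cfc_mul_sub_sub, ← ContinuousLinearMap.re_inner_apply_apply_of_isSelfAdjoint
      (hT.sub (.algebraMap _ (.all a)))]
    simp only [sub_apply, Algebra.algebraMap_eq_smul_one, smul_apply, one_apply_eq_self,
      Complex.coe_smul, RCLike.re_to_complex]
  calc (∀ t ∈ Set.Ioo a b, (t : ℂ) ∈ resolventSet ℂ T)
      ↔ ∀ t ∈ spectrum ℝ T, 0 ≤ (t - a) * (t - b) := by
        simp only [← Real.notMem_Ioo_iff_nonneg_mul_sub_mul_sub hab, ← Complex.coe_algebraMap,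
          spectrum.algebraMap_mem_resolventSet_iff]
        exact forall_congr' fun _ => imp_not_comm
    _ ↔ 0 ≤ S := (cfc_nonneg_iff _ T).symm
    _ ↔ _ := by simp only [ContinuousLinearMap.nonneg_iff_forall_re_inner_nonneg hS, hinner]
end

section
/- Let T be a bounded selfadjoint operator on a complex Hilbert space H and let a < b be real numbers. Then the spectrum of T is contained in the closed interval [a, b] if and only if Re⟨(T - a)x, (T - b)x⟩ ≤ 0 for all x ∈ H. -/
open scoped InnerProductSpace

/-!
With `S = (T - a)(b - T)`, self-adjointness of `T - a` gives
`Re ⟪S x, x⟫ = -Re ⟪(T - a)x, (T - b)x⟫`, so the condition says exactly `0 ≤ S`.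
By the continuous functional calculus `S = f(T)` for `f t = (t - a)(b - t)`, and `f(T) ≥ 0`
iff `f ≥ 0` on `σ(T)`, i.e. (as `a ≤ b`) iff `σ(T) ⊆ [a, b]`.
-/

theorem mem_Icc_iff_sub_mul_sub_nonneg {α : Type*} [Ring α] [LinearOrder α]
    [IsStrictOrderedRing α] {a b t : α} (hab : a ≤ b) :
    t ∈ Set.Icc a b ↔ 0 ≤ (t - a) * (b - t) := by
  refine ⟨fun ht => mul_nonneg (sub_nonneg.2 ht.1) (sub_nonneg.2 ht.2), fun h => ?_⟩
  by_contra ht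
  rcases not_and_or.1 ht with hta | hbt
  · have hta := not_le.1 hta
    exact h.not_gt (mul_neg_of_neg_of_pos (sub_neg.2 hta) (sub_pos.2 (hta.trans_le hab)))
  · have hbt := not_le.1 hbt
    exact h.not_gt (mul_neg_of_pos_of_neg (sub_pos.2 (hab.trans_lt hbt)) (sub_neg.2 hbt))

section CFC

variable {A : Type*} [Ring A] [StarRing A] [Algebra ℝ A] [TopologicalSpace A]
  [ContinuousFunctionalCalculus ℝ A IsSelfAdjoint]

theorem cfc_sub_mul_sub {T : A} (hT : IsSelfAdjoint T) (a b : ℝ) :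
    cfc (fun t : ℝ => (t - a) * (b - t)) T =
      (T - algebraMap ℝ A a) * (algebraMap ℝ A b - T) := by
  rw [cfc_mul .., cfc_sub .., cfc_sub .., cfc_id' .., cfc_const .., cfc_const ..]

theorem IsSelfAdjoint.spectrum_subset_Icc_iff [PartialOrder A] [StarOrderedRing A]
    [NonnegSpectrumClass ℝ A] {T : A} (hT : IsSelfAdjoint T) {a b : ℝ} (hab : a ≤ b) :
    spectrum ℝ T ⊆ Set.Icc a b ↔ 0 ≤ (T - algebraMap ℝ A a) * (algebraMap ℝ A b - T) := by
  rw [← cfc_sub_mul_sub hT, cfc_nonneg_iff ..]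
  exact forall₂_congr fun t _ => mem_Icc_iff_sub_mul_sub_nonneg hab

end CFC

theorem IsSelfAdjoint.spectrum_subset_ofReal_image_iff {A : Type*} [TopologicalSpace A]
    [Ring A] [StarRing A] [Algebra ℂ A] [ContinuousFunctionalCalculus ℂ A IsStarNormal] {T : A}
    (hT : IsSelfAdjoint T) (s : Set ℝ) :
    spectrum ℂ T ⊆ (fun t : ℝ => (t : ℂ)) '' s ↔ spectrum ℝ T ⊆ s := by
  rw [← hT.spectrumRestricts.algebraMap_image]
  exact Set.image_subset_image_iff Complex.ofReal_injective

namespace ContinuousLinearMap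

variable {H : Type*} [NormedAddCommGroup H] [InnerProductSpace ℂ H] [CompleteSpace H]

theorem nonneg_iff_reApplyInnerSelf_nonneg {S : H →L[ℂ] H} (hS : IsSelfAdjoint S) :
    0 ≤ S ↔ ∀ x, 0 ≤ S.reApplyInnerSelf x := by
  rw [nonneg_iff_isPositive, isPositive_def', and_iff_right hS]

theorem reApplyInnerSelf_sub_mul_sub {T : H →L[ℂ] H} (hT : IsSelfAdjoint T) (a b : ℝ) (x : H) :
    ((T - algebraMap ℝ _ a) * (algebraMap ℝ _ b - T)).reApplyInnerSelf x =
      -(⟪T x - (a : ℂ) • x, T x - (b : ℂ) • x⟫_ℂ).re := by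
  have hA : IsSelfAdjoint (T - algebraMap ℝ _ a) := hT.sub (.algebraMap _ (.all a))
  rw [reApplyInnerSelf_apply, mul_apply_eq_comp, ← hA.adjoint_eq, adjoint_inner_left,
    ← neg_sub T, neg_apply, inner_neg_left, map_neg, inner_re_symm]
  simp only [sub_apply, Algebra.algebraMap_eq_smul_one, smul_apply, one_apply_eq_self,
    Complex.coe_smul, RCLike.re_to_complex]

end ContinuousLinearMap

theorem stmt3 {H : Type*} [NormedAddCommGroup H] [InnerProductSpace ℂ H]
    [CompleteSpace H] (T : H →L[ℂ] H) (hT : IsSelfAdjoint T)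
    (a b : ℝ) (hab : a < b) :
    spectrum ℂ T ⊆ (fun t : ℝ => (t : ℂ)) '' Set.Icc a b ↔
      ∀ x : H, (⟪T x - (a : ℂ) • x, T x - (b : ℂ) • x⟫_ℂ).re ≤ 0 := by
  have hS : IsSelfAdjoint ((T - algebraMap ℝ _ a) * (algebraMap ℝ _ b - T)) :=
    cfc_sub_mul_sub hT a b ▸ cfc_predicate _ T
  rw [hT.spectrum_subset_ofReal_image_iff, hT.spectrum_subset_Icc_iff hab.le,
    ContinuousLinearMap.nonneg_iff_reApplyInnerSelf_nonneg hS]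
  simp only [ContinuousLinearMap.reApplyInnerSelf_sub_mul_sub hT, neg_nonneg]
end

section
/- Let T be a bounded selfadjoint operator on a complex Hilbert space H and let a < b with [a, b] contained in the resolvent set of T. Then there exists ε > 0 such that ⟨(T - a)x, (T - b)x⟩ ≥ ε(b - a + ε)‖x‖² for all x ∈ H. -/
/-!
The real spectrum of `T` is closed and misses `[a, b]`, hence misses `(a - ε, b + ε)` for some
`ε > 0`. On `(-∞, a - ε] ∪ [b + ε, ∞)` the polynomial `(t - a)(t - b)` is at least `ε(b - a + ε)`,
so by the continuous functional calculus `(T - a)(T - b) ≥ ε(b - a + ε)` in the Loewner order.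
Since `T - a` is selfadjoint, `⟨(T - a)x, (T - b)x⟩ = ⟨x, (T - a)(T - b)x⟩`.
-/

open scoped InnerProductSpace
open Set

theorem exists_pos_forall_le_sub_or_add_le_of_disjoint_Icc {α : Type*} [Field α] [LinearOrder α]
    [IsStrictOrderedRing α] [TopologicalSpace α] [OrderTopology α] {K : Set α} (hK : IsClosed K)
    {a b : α} (hab : a ≤ b) (h : Disjoint (Icc a b) K) :
    ∃ ε > 0, ∀ t ∈ K, t ≤ a - ε ∨ b + ε ≤ t := by
  have hKc : Icc a b ⊆ Kᶜ := h.subset_compl_right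
  obtain ⟨l, hla, hl⟩ := exists_Ioc_subset_of_mem_nhds
    (hK.isOpen_compl.mem_nhds (hKc ⟨le_rfl, hab⟩)) (exists_lt a)
  obtain ⟨u, hbu, hu⟩ := exists_Ico_subset_of_mem_nhds
    (hK.isOpen_compl.mem_nhds (hKc ⟨hab, le_rfl⟩)) (exists_gt b)
  refine ⟨min (a - l) (u - b), lt_min (by linarith) (by linarith), fun t ht => ?_⟩
  by_contra! hmid
  have hlu : l < t ∧ t < u := by
    constructor <;> linarith [min_le_left (a - l) (u - b), min_le_right (a - l) (u - b)]
  refine (?_ : t ∈ Kᶜ) ht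
  rcases le_or_gt t a with hta | hat
  · exact hl ⟨hlu.1, hta⟩
  rcases le_or_gt t b with htb | hbt
  · exact hKc ⟨hat.le, htb⟩
  · exact hu ⟨hbt.le, hlu.2⟩

theorem IsSelfAdjoint.algebraMap_le_sub_mul_sub_iff {A : Type*} [CStarAlgebra A] [PartialOrder A]
    [StarOrderedRing A] {T : A} (hT : IsSelfAdjoint T) (a b c : ℝ) :
    algebraMap ℝ A c ≤ (T - algebraMap ℝ A a) * (T - algebraMap ℝ A b) ↔
      ∀ t ∈ spectrum ℝ T, c ≤ (t - a) * (t - b) := by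
  have hcfc : (T - algebraMap ℝ A a) * (T - algebraMap ℝ A b) =
      cfc (fun t => (t - a) * (t - b)) T := by
    rw [cfc_mul .., cfc_sub .., cfc_sub .., cfc_id' .., cfc_const .., cfc_const ..]
  rw [hcfc, algebraMap_le_cfc_iff ..]

theorem ContinuousLinearMap.mul_norm_sq_le_re_inner_of_algebraMap_le {E : Type*}
    [NormedAddCommGroup E] [InnerProductSpace ℂ E] {S : E →L[ℂ] E} {c : ℝ}
    (h : algebraMap ℝ (E →L[ℂ] E) c ≤ S) (x : E) : c * ‖x‖ ^ 2 ≤ (⟪x, S x⟫_ℂ).re := by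
  simpa [inner_sub_right, Algebra.algebraMap_eq_smul_one, ← Complex.coe_smul, inner_smul_right,
    inner_self_eq_norm_sq_to_K, ← Complex.ofReal_pow] using
    ((le_def _ _).mp h).re_inner_nonneg_right x

theorem stmt4 {H : Type*} [NormedAddCommGroup H] [InnerProductSpace ℂ H]
    [CompleteSpace H] (T : H →L[ℂ] H) (hT : IsSelfAdjoint T)
    (a b : ℝ) (hab : a < b)
    (hres : ∀ t ∈ Set.Icc a b, (t : ℂ) ∈ resolventSet ℂ T) :
    ∃ ε > 0, ∀ x : H,
      ε * (b - a + ε) * ‖x‖ ^ 2 ≤ (⟪T x - (a : ℂ) • x, T x - (b : ℂ) • x⟫_ℂ).re := by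
  have hdisj : Disjoint (Icc a b) (spectrum ℝ T) :=
    disjoint_left.mpr fun t ht hspec => (spectrum.algebraMap_mem_iff ℂ).mpr hspec (hres t ht)
  obtain ⟨ε, hε, hgap⟩ :=
    exists_pos_forall_le_sub_or_add_le_of_disjoint_Icc (spectrum.isClosed T) hab.le hdisj
  have hle := (hT.algebraMap_le_sub_mul_sub_iff a b (ε * (b - a + ε))).mpr fun t ht => by
    rcases hgap t ht with h | h <;> nlinarith
  have hsa : IsSelfAdjoint (T - algebraMap ℝ (H →L[ℂ] H) a) := hT.sub (.algebraMap _ (.all a))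
  have hsub (r : ℝ) (y : H) : (T - algebraMap ℝ (H →L[ℂ] H) r) y = T y - (r : ℂ) • y := by
    simp [Algebra.algebraMap_eq_smul_one, Complex.coe_smul]
  refine ⟨ε, hε, fun x => ?_⟩
  calc ε * (b - a + ε) * ‖x‖ ^ 2
      ≤ (⟪x, ((T - algebraMap ℝ _ a) * (T - algebraMap ℝ _ b)) x⟫_ℂ).re :=
        ContinuousLinearMap.mul_norm_sq_le_re_inner_of_algebraMap_le hle x
    _ = (⟪T x - (a : ℂ) • x, T x - (b : ℂ) • x⟫_ℂ).re := by
        rw [mul_apply_eq_comp, ← hsa.isSymmetric.apply_clm, hsub, hsub]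
end

section
/- Let J be an invertible Hermitian N×N complex matrix whose number of negative eigenvalues (counted with multiplicity) is κ, and let A be a J-selfadjoint N×N matrix (J·A = Aᴴ·J) whose spectrum consists of real eigenvalues all lying in the open interval (a, b), where a < b are real. Then the Hermitian matrix H := (A - b)ᴴ J (A - a) has exactly κ positive eigenvalues and N - κ negative eigenvalues (counted with multiplicity). -/
/-!
For `c ∈ (a, b)` put `A_t := t A + (1 - t) c` and `F t := (A_t - b)ᴴ J (A_t - a)` for `t ∈ [0, 1]`.
Every `A_t` is `J`-selfadjoint with spectrum in `(a, b)`, so every `F t` is Hermitian and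
invertible. The positive index of inertia of a matrix (the largest dimension of a subspace on
which `x ↦ x* M x` is positive definite) is lower semicontinuous, and so is that of `-M`; as the
two add up to `N` for invertible Hermitian matrices, the index is constant along the path. At
`t = 0`, `F 0 = (c - b)(c - a) J` is a negative multiple of `J`, whose positive index is `κ`.
-/

open Filter Topology Module Finset

namespace Matrix

variable {n : Type*} [Fintype n]

def PosDefOn (M : Matrix n n ℂ) (W : Submodule ℂ (n → ℂ)) : Prop :=
  ∀ x ∈ W, x ≠ 0 → 0 < (star x ⬝ᵥ M *ᵥ x).re

/-- The positive index of inertia, defined variationally: this makes its congruence invariance and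
lower semicontinuity visible, and it is only afterwards identified with an eigenvalue count. -/
noncomputable def posIndex (M : Matrix n n ℂ) : ℕ :=
  sSup {k | ∃ W : Submodule ℂ (n → ℂ), M.PosDefOn W ∧ finrank ℂ W = k}

lemma bddAbove_finrank_posDefOn (M : Matrix n n ℂ) :
    BddAbove {k | ∃ W : Submodule ℂ (n → ℂ), M.PosDefOn W ∧ finrank ℂ W = k} :=
  ⟨Fintype.card n, by rintro _ ⟨W, -, rfl⟩; simpa using W.finrank_le⟩

lemma PosDefOn.finrank_le_posIndex {M : Matrix n n ℂ} {W : Submodule ℂ (n → ℂ)}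
    (hW : M.PosDefOn W) : finrank ℂ W ≤ M.posIndex :=
  le_csSup (bddAbove_finrank_posDefOn M) ⟨W, hW, rfl⟩

lemma exists_posDefOn_finrank_eq_posIndex (M : Matrix n n ℂ) :
    ∃ W : Submodule ℂ (n → ℂ), M.PosDefOn W ∧ finrank ℂ W = M.posIndex :=
  Nat.sSup_mem (s := {k | ∃ W : Submodule ℂ (n → ℂ), M.PosDefOn W ∧ finrank ℂ W = k})
    ⟨0, ⊥, fun _ hx hx0 => (hx0 ((Submodule.mem_bot ℂ).1 hx)).elim, finrank_bot ℂ _⟩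
    (bddAbove_finrank_posDefOn M)

lemma posIndex_add_finrank_le {M : Matrix n n ℂ} {V : Submodule ℂ (n → ℂ)}
    (hV : ∀ x ∈ V, (star x ⬝ᵥ M *ᵥ x).re ≤ 0) : M.posIndex + finrank ℂ V ≤ Fintype.card n := by
  obtain ⟨W, hW, hWr⟩ := exists_posDefOn_finrank_eq_posIndex M
  rw [← hWr, ← Module.finrank_fintype_fun_eq_card ℂ]
  refine Submodule.finrank_add_finrank_le_of_disjoint
    (Submodule.disjoint_def.2 fun x hxW hxV => ?_)
  by_contra hx
  exact (hW x hxW hx).not_ge (hV x hxV)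

lemma posIndex_conjTranspose_mul_mul_le {P : Matrix n n ℂ} (hP : Function.Injective P.mulVec)
    (M : Matrix n n ℂ) : (Pᴴ * M * P).posIndex ≤ M.posIndex := by
  obtain ⟨W, hW, hWr⟩ := exists_posDefOn_finrank_eq_posIndex (Pᴴ * M * P)
  have hmap : M.PosDefOn (W.map P.mulVecLin) := by
    rintro _ ⟨x, hx, rfl⟩ hPx
    have hx0 : x ≠ 0 := by rintro rfl; simp at hPx
    simpa [star_mulVec, dotProduct_mulVec, vecMul_vecMul, mulVec_mulVec, mul_assoc]
      using hW x hx hx0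
  rw [← hWr, (Submodule.equivMapOfInjective P.mulVecLin hP W).finrank_eq]
  exact hmap.finrank_le_posIndex

lemma re_star_dotProduct_mulVec_real_smul (M : Matrix n n ℂ) (r : ℝ) (x : n → ℂ) :
    (star (r • x) ⬝ᵥ M *ᵥ (r • x)).re = r ^ 2 * (star x ⬝ᵥ M *ᵥ x).re := by
  simp [star_smul, mulVec_smul, smul_dotProduct, dotProduct_smul]
  ring

lemma posDefOn_iff_forall_sphere {M : Matrix n n ℂ} {W : Submodule ℂ (n → ℂ)} :
    M.PosDefOn W ↔ ∀ y ∈ (W : Set (n → ℂ)) ∩ Metric.sphere 0 1, 0 < (star y ⬝ᵥ M *ᵥ y).re := by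
  refine ⟨fun h y ⟨hyW, hy⟩ => h y hyW (ne_zero_of_mem_unit_sphere ⟨y, hy⟩),
    fun h x hxW hx0 => ?_⟩
  have hx : 0 < ‖x‖ := norm_pos_iff.2 hx0
  have hy : ‖x‖⁻¹ • x ∈ (W : Set (n → ℂ)) ∩ Metric.sphere 0 1 :=
    ⟨W.smul_of_tower_mem _ hxW, by simp [norm_smul, hx.ne']⟩
  have hscale := re_star_dotProduct_mulVec_real_smul M ‖x‖ (‖x‖⁻¹ • x)
  rw [smul_inv_smul₀ hx.ne'] at hscale
  rw [hscale]
  exact mul_pos (by positivity) (h _ hy)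

lemma isOpen_setOf_posDefOn (W : Submodule ℂ (n → ℂ)) :
    IsOpen {M : Matrix n n ℂ | M.PosDefOn W} := by
  have hK : IsCompact ((W : Set (n → ℂ)) ∩ Metric.sphere 0 1) :=
    (isCompact_sphere 0 1).inter_left W.closed_of_finiteDimensional
  have hq : Continuous fun p : Matrix n n ℂ × (n → ℂ) => (star p.2 ⬝ᵥ p.1 *ᵥ p.2).re := by
    fun_prop
  simp_rw [posDefOn_iff_forall_sphere]
  exact isOpen_iff_eventually.2 fun M₀ hM₀ => hK.eventually_forall_of_forall_eventually
    fun y hy => (hq.isOpen_preimage _ isOpen_Ioi).mem_nhds (hM₀ y hy)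

lemma eventually_posIndex_le (M₀ : Matrix n n ℂ) :
    ∀ᶠ M in 𝓝 M₀, M₀.posIndex ≤ M.posIndex := by
  obtain ⟨W, hW, hWr⟩ := exists_posDefOn_finrank_eq_posIndex M₀
  filter_upwards [(isOpen_setOf_posDefOn W).mem_nhds hW] with M hM
  exact hWr ▸ hM.finrank_le_posIndex

/-- `A` is selfadjoint for the indefinite inner product `[x, y] = (J x, y)`. -/
def IsSelfAdjointWrt (J A : Matrix n n ℂ) : Prop :=
  J * A = Aᴴ * J

lemma isHermitian_conjTranspose_mul_mul_of_commute {J B C : Matrix n n ℂ} (hJ : J.IsHermitian)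
    (hB : IsSelfAdjointWrt J B) (hC : IsSelfAdjointWrt J C) (hBC : Commute B C) :
    (Cᴴ * J * B).IsHermitian := by
  unfold IsSelfAdjointWrt at hB hC
  rw [IsHermitian, conjTranspose_mul, conjTranspose_mul, conjTranspose_conjTranspose, hJ.eq,
    ← mul_assoc, ← hB, mul_assoc, hBC.eq, ← mul_assoc, hC]

variable [DecidableEq n]

lemma IsSelfAdjointWrt.real_smul_add_real_smul_one {J A : Matrix n n ℂ}
    (hA : IsSelfAdjointWrt J A) (r s : ℝ) :
    IsSelfAdjointWrt J ((r : ℂ) • A + (s : ℂ) • 1) := by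
  unfold IsSelfAdjointWrt at hA ⊢
  simp [mul_add, add_mul, hA]

lemma commute_smul_add_smul_one (A : Matrix n n ℂ) (r s s' : ℂ) :
    Commute (r • A + s • 1) (r • A + s' • 1) :=
  ((((Commute.refl A).smul_left r).smul_right r).add_right
    ((Commute.one_right _).smul_right s')).add_left
    (((Commute.one_left _).smul_left s).add_right ((Commute.one_left _).smul_left s |>.smul_right s'))

lemma posIndex_conjTranspose_mul_mul {P : Matrix n n ℂ} (hP : IsUnit P) (M : Matrix n n ℂ) :
    (Pᴴ * M * P).posIndex = M.posIndex := by
  refine le_antisymm (posIndex_conjTranspose_mul_mul_le (mulVec_injective_iff_isUnit.2 hP) M) ?_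
  have hM : M = (P⁻¹)ᴴ * (Pᴴ * M * P) * P⁻¹ := by
    rw [← mul_assoc, ← mul_assoc, ← conjTranspose_mul, mul_assoc, mul_assoc,
      mul_nonsing_inv _ ((isUnit_iff_isUnit_det P).1 hP)]
    simp
  conv_lhs => rw [hM]
  exact posIndex_conjTranspose_mul_mul_le
    (mulVec_injective_iff_isUnit.2 (isUnit_nonsing_inv_iff.2 hP)) _

lemma re_star_dotProduct_diagonal_mulVec (d : n → ℝ) (x : n → ℂ) :
    (star x ⬝ᵥ diagonal (fun i => (d i : ℂ)) *ᵥ x).re = ∑ i, d i * Complex.normSq (x i) := by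
  simp only [dotProduct, mulVec_diagonal, Complex.re_sum, Pi.star_apply]
  refine Finset.sum_congr rfl fun i _ => ?_
  simp [Complex.mul_re, Complex.normSq_apply]
  ring

lemma posIndex_diagonal (d : n → ℝ) :
    (diagonal fun i => (d i : ℂ)).posIndex = #{i | 0 < d i} := by
  have hpos : (diagonal fun i => (d i : ℂ)).PosDefOn (Pi.spanSubset ℂ {i | 0 < d i}) := by
    intro x hx hx0
    rw [Pi.mem_spanSubset_iff] at hx
    obtain ⟨i, hi⟩ := Function.ne_iff.1 hx0
    have hdi : 0 < d i := by_contra fun h => hi (hx i h)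
    rw [re_star_dotProduct_diagonal_mulVec]
    refine sum_pos' (fun j _ => ?_) ⟨i, mem_univ _, mul_pos hdi (Complex.normSq_pos.2 hi)⟩
    by_cases hj : 0 < d j
    · exact mul_nonneg hj.le (Complex.normSq_nonneg _)
    · simp [hx j hj]
  have hnonpos : ∀ x ∈ Pi.spanSubset ℂ {i | ¬ 0 < d i},
      (star x ⬝ᵥ (diagonal fun i => (d i : ℂ)) *ᵥ x).re ≤ 0 := by
    intro x hx
    rw [Pi.mem_spanSubset_iff] at hx
    rw [re_star_dotProduct_diagonal_mulVec]
    refine sum_nonpos fun j _ => ?_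
    by_cases hj : 0 < d j
    · simp [hx j (not_not.2 hj)]
    · exact mul_nonpos_of_nonpos_of_nonneg (not_lt.1 hj) (Complex.normSq_nonneg _)
  have hcard := card_filter_add_card_filter_not (s := univ) (fun i => 0 < d i)
  have hge := hpos.finrank_le_posIndex
  have hle := posIndex_add_finrank_le hnonpos
  simp only [Pi.dim_spanSubset, Set.ncard_eq_toFinset_card', Set.toFinset_ofPred, card_univ]
    at hge hle hcard
  omega

lemma IsHermitian.posIndex_real_smul {M : Matrix n n ℂ} (hM : M.IsHermitian) (r : ℝ) :
    ((r : ℂ) • M).posIndex = #{i | 0 < r * hM.eigenvalues i} := by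
  set U : Matrix n n ℂ := (hM.eigenvectorUnitary : Matrix n n ℂ)
  have hdiag : (r : ℂ) • M =
      (star U)ᴴ * diagonal (fun i => ((r * hM.eigenvalues i : ℝ) : ℂ)) * star U := by
    conv_lhs => rw [hM.spectral_theorem, Unitary.conjStarAlgAut_apply]
    rw [star_eq_conjTranspose, conjTranspose_conjTranspose, ← smul_mul_assoc, ← mul_smul_comm,
      ← diagonal_smul]
    congr 3
    ext i
    simp
  have hU : IsUnit (star U) := Unitary.isUnit_coe (U := star hM.eigenvectorUnitary)
  rw [hdiag, posIndex_conjTranspose_mul_mul hU, posIndex_diagonal]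

lemma IsHermitian.posIndex_eq {M : Matrix n n ℂ} (hM : M.IsHermitian) :
    M.posIndex = #{i | 0 < hM.eigenvalues i} := by
  simpa using hM.posIndex_real_smul 1

lemma IsHermitian.posIndex_neg {M : Matrix n n ℂ} (hM : M.IsHermitian) :
    (-M).posIndex = #{i | hM.eigenvalues i < 0} := by
  simpa using hM.posIndex_real_smul (-1)

lemma IsHermitian.eigenvalues_ne_zero {M : Matrix n n ℂ} (hM : M.IsHermitian)
    (hdet : IsUnit M.det) (i : n) : hM.eigenvalues i ≠ 0 := by
  have hprod : ∏ j, (hM.eigenvalues j : ℂ) ≠ 0 := hM.det_eq_prod_eigenvalues ▸ hdet.ne_zero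
  exact_mod_cast prod_ne_zero_iff.1 hprod i (mem_univ i)

lemma IsHermitian.card_pos_add_card_neg {M : Matrix n n ℂ} (hM : M.IsHermitian)
    (hdet : IsUnit M.det) :
    #{i | 0 < hM.eigenvalues i} + #{i | hM.eigenvalues i < 0} = Fintype.card n := by
  rw [← card_univ, ← card_filter_add_card_filter_not (s := univ) (fun i => 0 < hM.eigenvalues i)]
  congr 2
  ext i
  have := hM.eigenvalues_ne_zero hdet i
  simp only [mem_filter, mem_univ, true_and, not_lt]
  exact ⟨le_of_lt, fun h => lt_of_le_of_ne h this⟩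

lemma IsHermitian.posIndex_add_posIndex_neg {M : Matrix n n ℂ} (hM : M.IsHermitian)
    (hdet : IsUnit M.det) : M.posIndex + (-M).posIndex = Fintype.card n := by
  rw [hM.posIndex_eq, hM.posIndex_neg, hM.card_pos_add_card_neg hdet]

lemma continuousOn_posIndex :
    ContinuousOn posIndex {M : Matrix n n ℂ | M.IsHermitian ∧ IsUnit M.det} := by
  rintro M₀ ⟨hH₀, hdet₀⟩
  rw [ContinuousWithinAt, nhds_discrete, tendsto_pure]
  have hneg : ∀ᶠ M in 𝓝 M₀, (-M₀).posIndex ≤ (-M).posIndex :=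
    (continuous_neg.tendsto M₀).eventually (eventually_posIndex_le (-M₀))
  filter_upwards [nhdsWithin_le_nhds (eventually_posIndex_le M₀), nhdsWithin_le_nhds hneg,
    self_mem_nhdsWithin] with M hle hle' ⟨hH, hdet⟩
  have := hH.posIndex_add_posIndex_neg hdet
  have := hH₀.posIndex_add_posIndex_neg hdet₀
  omega

end Matrix

lemma isUnit_sub_real_smul_one_of_spectrum_subset {R : Type*} [Ring R] [Algebra ℂ R] {A : R}
    {a b μ : ℝ} (hspec : spectrum ℂ A ⊆ (fun t : ℝ => (t : ℂ)) '' Set.Ioo a b)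
    (hμ : μ ∉ Set.Ioo a b) : IsUnit (A - (μ : ℂ) • 1) := by
  have hμA : (μ : ℂ) ∉ spectrum ℂ A := fun h => by
    obtain ⟨t, ht, htμ⟩ := hspec h
    exact hμ (Complex.ofReal_injective htμ ▸ ht)
  rwa [spectrum.notMem_iff, Algebra.algebraMap_eq_smul_one, ← IsUnit.neg_iff, neg_sub] at hμA

lemma Matrix.isUnit_real_smul_add_real_smul_one {n : Type*} [Fintype n] [DecidableEq n]
    {A : Matrix n n ℂ} {a b c t μ : ℝ}
    (hspec : spectrum ℂ A ⊆ (fun t : ℝ => (t : ℂ)) '' Set.Ioo a b)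
    (hc : c ∈ Set.Ioo a b) (ht : t ∈ Set.Icc (0 : ℝ) 1) (hμ : μ ∉ Set.Ioo a b) :
    IsUnit ((t : ℂ) • A + (((1 - t) * c - μ : ℝ) : ℂ) • 1) := by
  rcases ht.1.eq_or_lt with rfl | ht0
  · have hcμ : ((c - μ : ℝ) : ℂ) ≠ 0 := by
      exact_mod_cast sub_ne_zero.2 (ne_of_mem_of_not_mem hc hμ)
    have h0 : ((0 : ℝ) : ℂ) • A + (((1 - 0) * c - μ : ℝ) : ℂ) • 1 = ((c - μ : ℝ) : ℂ) • 1 := by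
      simp
    rw [h0]
    exact isUnit_one.smul (Units.mk0 _ hcμ)
  · set μ' := (μ - (1 - t) * c) / t
    -- `μ` is the convex combination `t μ' + (1 - t) c`
    have hμ' : μ' ∉ Set.Ioo a b := fun h => hμ <| by
      convert (convex_Ioo a b) h hc ht0.le (sub_nonneg.2 ht.2) (by ring) using 1
      simp only [μ', smul_eq_mul]
      field_simp
      ring
    have ht0' : (t : ℂ) ≠ 0 := by exact_mod_cast ht0.ne'
    have hfactor :
        (t : ℂ) • A + (((1 - t) * c - μ : ℝ) : ℂ) • 1 = (t : ℂ) • (A - (μ' : ℂ) • 1) := by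
      simp only [μ', smul_sub, smul_smul]
      push_cast
      rw [mul_div_cancel₀ _ ht0']
      module
    rw [hfactor]
    exact (isUnit_sub_real_smul_one_of_spectrum_subset hspec hμ').smul (Units.mk0 _ ht0')

open Matrix

theorem stmt6 {N : ℕ} (J A : Matrix (Fin N) (Fin N) ℂ)
    (hJinv : IsUnit J.det) (hJ : J.IsHermitian) (κ : ℕ)
    (hκ : (Finset.univ.filter fun i => hJ.eigenvalues i < 0).card = κ)
    (hA : J * A = Aᴴ * J) (a b : ℝ) (hab : a < b)
    (hspec : spectrum ℂ A ⊆ (fun t : ℝ => (t : ℂ)) '' Set.Ioo a b) :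
    ∃ hH : ((A - (b : ℂ) • 1)ᴴ * J * (A - (a : ℂ) • 1)).IsHermitian,
      (Finset.univ.filter fun i => 0 < hH.eigenvalues i).card = κ ∧
      (Finset.univ.filter fun i => hH.eigenvalues i < 0).card = N - κ := by
  obtain ⟨c, hc⟩ := Set.nonempty_Ioo.2 hab
  have hAJ : IsSelfAdjointWrt J A := hA
  -- `P t μ = A_t - μ` along the homotopy `A_t = t A + (1 - t) c`
  let P : ℝ → ℝ → Matrix (Fin N) (Fin N) ℂ := fun t μ =>
    (t : ℂ) • A + (((1 - t) * c - μ : ℝ) : ℂ) • 1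
  let F : ℝ → Matrix (Fin N) (Fin N) ℂ := fun t => (P t b)ᴴ * J * P t a
  have hF : ∀ t, (F t).IsHermitian := fun t =>
    isHermitian_conjTranspose_mul_mul_of_commute hJ (hAJ.real_smul_add_real_smul_one _ _)
      (hAJ.real_smul_add_real_smul_one _ _) (commute_smul_add_smul_one _ _ _ _)
  have hFdet : ∀ t ∈ Set.Icc (0 : ℝ) 1, IsUnit (F t).det := fun t ht =>
    (isUnit_iff_isUnit_det _).1 <|
      ((isUnit_real_smul_add_real_smul_one hspec hc ht (by simp)).star.mul
        ((isUnit_iff_isUnit_det J).2 hJinv)).mul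
        (isUnit_real_smul_add_real_smul_one hspec hc ht (by simp))
  have hpath : (F 1).posIndex = (F 0).posIndex :=
    isPreconnected_Icc.constant
      (continuousOn_posIndex.comp (by fun_prop) fun t ht => ⟨hF t, hFdet t ht⟩)
      (Set.right_mem_Icc.2 zero_le_one) (Set.left_mem_Icc.2 zero_le_one)
  have hF1 : F 1 = (A - (b : ℂ) • 1)ᴴ * J * (A - (a : ℂ) • 1) := by
    simp [F, P, sub_eq_add_neg]
  have hF0 : F 0 = (((c - b) * (c - a) : ℝ) : ℂ) • J := by
    simp [F, P, smul_smul, mul_comm]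
  obtain ⟨hH, hHdet⟩ : ((A - (b : ℂ) • 1)ᴴ * J * (A - (a : ℂ) • 1)).IsHermitian ∧
      IsUnit ((A - (b : ℂ) • 1)ᴴ * J * (A - (a : ℂ) • 1)).det :=
    hF1 ▸ ⟨hF 1, hFdet 1 (Set.right_mem_Icc.2 zero_le_one)⟩
  have hpos : #{i | 0 < hH.eigenvalues i} = κ := by
    have hr : (c - b) * (c - a) < 0 := mul_neg_of_neg_of_pos (sub_neg.2 hc.2) (sub_pos.2 hc.1)
    rw [← hH.posIndex_eq, ← hF1, hpath, hF0, hJ.posIndex_real_smul, ← hκ]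
    congr 1
    ext i
    simpa using ⟨fun h => neg_of_mul_pos_right h hr.le, mul_pos_of_neg_of_neg hr⟩
  refine ⟨hH, hpos, ?_⟩
  have hcard := hH.card_pos_add_card_neg hHdet
  rw [Fintype.card_fin] at hcard
  omega
end

section
/- Let J be an invertible Hermitian N×N complex matrix with exactly κ negative eigenvalues, and let A be a J-selfadjoint N×N matrix (J·A = Aᴴ·J) such that no point of the closed real interval [a, b] (a < b) belongs to the spectrum of A. Then the Hermitian matrix H := (A - b)ᴴ J (A - a) has exactly κ negative eigenvalues and N - κ positive eigenvalues (counted with multiplicity). -/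
/-!
The matrices `H t = (A - t)ᴴ J (A - a)`, `t ∈ [a, b]`, are Hermitian, because `J (A - t) =
(A - t)ᴴ J` and `A - t`, `A - a` commute, and invertible, because `A - t` is invertible on
`[a, b]`. The number of negative eigenvalues of a Hermitian matrix is the largest dimension of a
subspace on which `x ↦ re ⟪x, H x⟫` is negative definite; such subspaces survive small
perturbations, so along a continuous path of invertible Hermitian matrices both the negative and
the positive index can only grow, while their sum stays `N`. Hence `H b` has as many negative
eigenvalues as `H a = (A - a)ᴴ J (A - a)`, which by Sylvester's law of inertia has as many as `J`.
-/

open Matrix Finset Module Filter Topology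

lemma exists_pos_forall_ne_zero_le_abs {ι : Type*} [Finite ι] (f : ι → ℝ) :
    ∃ δ > 0, ∀ i, f i ≠ 0 → δ ≤ |f i| := by
  have h : ∀ᶠ δ in 𝓝[>] (0 : ℝ), ∀ i, f i ≠ 0 → δ ≤ |f i| :=
    eventually_all.2 fun i => by
      by_cases hi : f i = 0
      · simp [hi]
      · exact (eventually_le_nhds (abs_pos.2 hi)).filter_mono nhdsWithin_le_nhds |>.mono
          fun δ hδ _ => hδ
  obtain ⟨δ, hδ, hpos⟩ := (h.and self_mem_nhdsWithin).exists
  exact ⟨δ, hpos, hδ⟩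

namespace OrthonormalBasis
variable {ι 𝕜 E : Type*} [Fintype ι] [RCLike 𝕜] [NormedAddCommGroup E]
  [InnerProductSpace 𝕜 E] (b : OrthonormalBasis ι 𝕜 E)

lemma finrank_span_subfamily (s : Finset ι) :
    finrank 𝕜 (Submodule.span 𝕜 (Set.range fun i : s => b i)) = #s :=
  (finrank_span_eq_card (b.orthonormal.linearIndependent.comp _ Subtype.val_injective)).trans
    (Fintype.card_coe s)

lemma repr_eq_zero_of_mem_span_subfamily {s : Finset ι} {x : E}
    (hx : x ∈ Submodule.span 𝕜 (Set.range fun i : s => b i)) {i : ι} (hi : i ∉ s) :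
    b.repr x i = 0 := by
  classical
  induction hx using Submodule.span_induction with
  | mem y hy =>
    obtain ⟨j, rfl⟩ := hy
    simp [show i ≠ j from fun h => hi (h ▸ j.2)]
  | zero => simp
  | add y z _ _ hy hz => simp [hy, hz]
  | smul c y _ hy => simp [hy]

lemma exists_mem_ne_zero_forall_repr_eq_zero {W : Submodule 𝕜 E} [FiniteDimensional 𝕜 E]
    {s : Finset ι} (h : #s < finrank 𝕜 W) :
    ∃ x ∈ W, x ≠ 0 ∧ ∀ i ∈ s, b.repr x i = 0 := by
  let f : W →ₗ[𝕜] (s → 𝕜) :=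
    LinearMap.pi fun i : s => (innerₛₗ 𝕜 (b i)) ∘ₗ W.subtype
  have hker : LinearMap.ker f ≠ ⊥ :=
    LinearMap.ker_ne_bot_of_finrank_lt (by rwa [finrank_fintype_fun_eq_card, Fintype.card_coe])
  obtain ⟨⟨x, hxW⟩, hx, hx0⟩ := Submodule.exists_mem_ne_zero_of_ne_bot hker
  refine ⟨x, hxW, fun h => hx0 (by simpa using h), fun i hi => ?_⟩
  rw [b.repr_apply_apply]
  exact congr_fun hx ⟨i, hi⟩

end OrthonormalBasis

namespace Matrix

variable {𝕜 n : Type*} [RCLike 𝕜] [Fintype n] [DecidableEq n] {M : Matrix n n 𝕜}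

noncomputable def hermForm (M : Matrix n n 𝕜) (x : EuclideanSpace 𝕜 n) : ℝ :=
  RCLike.re (inner 𝕜 x (toEuclideanCLM (n := n) (𝕜 := 𝕜) M x))

lemma hermForm_eq_add_hermForm_sub (M M' : Matrix n n 𝕜) (x : EuclideanSpace 𝕜 n) :
    M'.hermForm x = M.hermForm x + (M' - M).hermForm x := by
  simp only [hermForm, map_sub, FunLike.coe_sub, Pi.sub_apply, inner_sub_right]
  ring

lemma abs_hermForm_le (M : Matrix n n 𝕜) (x : EuclideanSpace 𝕜 n) :
    |M.hermForm x| ≤ ‖toEuclideanCLM (n := n) (𝕜 := 𝕜) M‖ * ‖x‖ ^ 2 :=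
  calc |M.hermForm x| ≤ ‖inner 𝕜 x (toEuclideanCLM (n := n) (𝕜 := 𝕜) M x)‖ :=
        RCLike.abs_re_le_norm _
    _ ≤ ‖x‖ * (‖toEuclideanCLM (n := n) (𝕜 := 𝕜) M‖ * ‖x‖) :=
        (norm_inner_le_norm _ _).trans (by gcongr; exact ContinuousLinearMap.le_opNorm _ _)
    _ = _ := by ring

lemma eventually_norm_toEuclideanCLM_sub_lt (M : Matrix n n 𝕜) {δ : ℝ} (hδ : 0 < δ) :
    ∀ᶠ M' in 𝓝 M, ‖toEuclideanCLM (n := n) (𝕜 := 𝕜) (M' - M)‖ < δ := by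
  have hcont : Continuous (toEuclideanCLM (n := n) (𝕜 := 𝕜)) :=
    LinearMap.continuous_of_finiteDimensional
      (toEuclideanCLM (n := n) (𝕜 := 𝕜)).toAlgEquiv.toLinearMap
  refine ContinuousAt.eventually_lt (g := fun _ => δ) ?_ continuousAt_const (by simpa using hδ)
  fun_prop

lemma hermForm_conjTranspose_mul_mul (M C : Matrix n n 𝕜) (x : EuclideanSpace 𝕜 n) :
    (Cᴴ * M * C).hermForm x = M.hermForm (toEuclideanCLM (n := n) (𝕜 := 𝕜) C x) := by
  rw [hermForm, hermForm, map_mul, map_mul, ← star_eq_conjTranspose, map_star,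
    mul_apply_eq_comp, mul_apply_eq_comp, ContinuousLinearMap.star_eq_adjoint,
    ContinuousLinearMap.adjoint_inner_right]

namespace IsHermitian

lemma toEuclideanCLM_eigenvectorBasis (hM : M.IsHermitian) (i : n) :
    toEuclideanCLM (n := n) (𝕜 := 𝕜) M (hM.eigenvectorBasis i) =
      (hM.eigenvalues i : 𝕜) • hM.eigenvectorBasis i := by
  apply WithLp.ofLp_injective
  rw [ofLp_toEuclideanCLM, hM.mulVec_eigenvectorBasis, WithLp.ofLp_smul,
    RCLike.real_smul_eq_coe_smul (K := 𝕜)]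

lemma repr_toEuclideanCLM (hM : M.IsHermitian) (x : EuclideanSpace 𝕜 n) (i : n) :
    hM.eigenvectorBasis.repr (toEuclideanCLM (n := n) (𝕜 := 𝕜) M x) i =
      hM.eigenvalues i * hM.eigenvectorBasis.repr x i := by
  have hsymm := isSymmetric_toEuclideanLin_iff.mpr hM (hM.eigenvectorBasis i) x
  rw [← coe_toEuclideanCLM_eq_toEuclideanLin, ContinuousLinearMap.coe_coe,
    toEuclideanCLM_eigenvectorBasis, inner_smul_left, RCLike.conj_ofReal] at hsymm
  rw [OrthonormalBasis.repr_apply_apply, OrthonormalBasis.repr_apply_apply, hsymm]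

lemma hermForm_eq_sum (hM : M.IsHermitian) (x : EuclideanSpace 𝕜 n) :
    M.hermForm x = ∑ i, hM.eigenvalues i * ‖hM.eigenvectorBasis.repr x i‖ ^ 2 := by
  rw [hermForm, ← hM.eigenvectorBasis.repr.inner_map_map, PiLp.inner_apply, map_sum]
  refine Finset.sum_congr rfl fun i _ => ?_
  rw [repr_toEuclideanCLM, RCLike.inner_apply, mul_assoc, RCLike.mul_conj]
  norm_cast

lemma norm_sq_eq_sum (hM : M.IsHermitian) (x : EuclideanSpace 𝕜 n) :
    ‖x‖ ^ 2 = ∑ i, ‖hM.eigenvectorBasis.repr x i‖ ^ 2 := by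
  rw [← hM.eigenvectorBasis.repr.norm_map, EuclideanSpace.norm_sq_eq]

noncomputable def negIndex (hM : M.IsHermitian) : ℕ := #{i | hM.eigenvalues i < 0}

noncomputable def posIndex (hM : M.IsHermitian) : ℕ := #{i | 0 < hM.eigenvalues i}

lemma negIndex_add_posIndex (hM : M.IsHermitian) (hdet : IsUnit M.det) :
    hM.negIndex + hM.posIndex = Fintype.card n := by
  have hne : ∀ i, hM.eigenvalues i ≠ 0 := by
    have := hdet.ne_zero
    rw [hM.det_eq_prod_eigenvalues, Finset.prod_ne_zero_iff] at this
    exact fun i => by exact_mod_cast this i (mem_univ i)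
  have hpos : univ.filter (fun i => 0 < hM.eigenvalues i) =
      univ.filter (fun i => ¬hM.eigenvalues i < 0) :=
    Finset.filter_congr fun i _ => by rw [not_lt, lt_iff_le_and_ne, and_iff_left (hne i).symm]
  rw [negIndex, posIndex, hpos, Finset.card_filter_add_card_filter_not, Finset.card_univ]

lemma finrank_le_negIndex (hM : M.IsHermitian) {W : Submodule 𝕜 (EuclideanSpace 𝕜 n)}
    (hW : ∀ x ∈ W, x ≠ 0 → M.hermForm x < 0) : finrank 𝕜 W ≤ hM.negIndex := by
  by_contra! h
  obtain ⟨x, hxW, hx0, hx⟩ := hM.eigenvectorBasis.exists_mem_ne_zero_forall_repr_eq_zero h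
  refine (hW x hxW hx0).not_ge ?_
  rw [hM.hermForm_eq_sum]
  refine Finset.sum_nonneg fun i _ => ?_
  by_cases hi : hM.eigenvalues i < 0
  · simp [hx i (by simpa using hi)]
  · exact mul_nonneg (not_lt.1 hi) (sq_nonneg _)

lemma finrank_le_posIndex (hM : M.IsHermitian) {W : Submodule 𝕜 (EuclideanSpace 𝕜 n)}
    (hW : ∀ x ∈ W, x ≠ 0 → 0 < M.hermForm x) : finrank 𝕜 W ≤ hM.posIndex := by
  by_contra! h
  obtain ⟨x, hxW, hx0, hx⟩ := hM.eigenvectorBasis.exists_mem_ne_zero_forall_repr_eq_zero h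
  refine (hW x hxW hx0).not_ge ?_
  rw [hM.hermForm_eq_sum]
  refine Finset.sum_nonpos fun i _ => ?_
  by_cases hi : 0 < hM.eigenvalues i
  · simp [hx i (by simpa using hi)]
  · exact mul_nonpos_of_nonpos_of_nonneg (not_lt.1 hi) (sq_nonneg _)

lemma exists_finrank_eq_negIndex (hM : M.IsHermitian) :
    ∃ W : Submodule 𝕜 (EuclideanSpace 𝕜 n), finrank 𝕜 W = hM.negIndex ∧
      ∃ δ > 0, ∀ x ∈ W, M.hermForm x ≤ -δ * ‖x‖ ^ 2 := by
  obtain ⟨δ, hδ, hle⟩ := exists_pos_forall_ne_zero_le_abs hM.eigenvalues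
  refine ⟨_, hM.eigenvectorBasis.finrank_span_subfamily {i | hM.eigenvalues i < 0}, δ, hδ,
    fun x hx => ?_⟩
  rw [hM.hermForm_eq_sum, hM.norm_sq_eq_sum, Finset.mul_sum]
  refine Finset.sum_le_sum fun i _ => ?_
  by_cases hi : hM.eigenvalues i < 0
  · have := hle i hi.ne
    rw [abs_of_neg hi] at this
    exact mul_le_mul_of_nonneg_right (by linarith) (sq_nonneg _)
  · simp [hM.eigenvectorBasis.repr_eq_zero_of_mem_span_subfamily hx (by simpa using hi)]

lemma exists_finrank_eq_posIndex (hM : M.IsHermitian) :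
    ∃ W : Submodule 𝕜 (EuclideanSpace 𝕜 n), finrank 𝕜 W = hM.posIndex ∧
      ∃ δ > 0, ∀ x ∈ W, δ * ‖x‖ ^ 2 ≤ M.hermForm x := by
  obtain ⟨δ, hδ, hle⟩ := exists_pos_forall_ne_zero_le_abs hM.eigenvalues
  refine ⟨_, hM.eigenvectorBasis.finrank_span_subfamily {i | 0 < hM.eigenvalues i}, δ, hδ,
    fun x hx => ?_⟩
  rw [hM.hermForm_eq_sum, hM.norm_sq_eq_sum, Finset.mul_sum]
  refine Finset.sum_le_sum fun i _ => ?_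
  by_cases hi : 0 < hM.eigenvalues i
  · have := hle i hi.ne'
    rw [abs_of_pos hi] at this
    exact mul_le_mul_of_nonneg_right this (sq_nonneg _)
  · simp [hM.eigenvectorBasis.repr_eq_zero_of_mem_span_subfamily hx (by simpa using hi)]

lemma eventually_negIndex_le (hM : M.IsHermitian) :
    ∀ᶠ M' in 𝓝 M, ∀ hM' : M'.IsHermitian, hM.negIndex ≤ hM'.negIndex := by
  obtain ⟨W, hW, δ, hδ, hneg⟩ := hM.exists_finrank_eq_negIndex
  filter_upwards [M.eventually_norm_toEuclideanCLM_sub_lt hδ] with M' hclose hM'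
  rw [← hW]
  refine hM'.finrank_le_negIndex fun x hx hx0 => ?_
  have hx2 : 0 < ‖x‖ ^ 2 := by positivity
  rw [hermForm_eq_add_hermForm_sub M M']
  nlinarith [abs_le.1 (abs_hermForm_le (M' - M) x), hneg x hx, mul_lt_mul_of_pos_right hclose hx2]

lemma eventually_posIndex_le (hM : M.IsHermitian) :
    ∀ᶠ M' in 𝓝 M, ∀ hM' : M'.IsHermitian, hM.posIndex ≤ hM'.posIndex := by
  obtain ⟨W, hW, δ, hδ, hpos⟩ := hM.exists_finrank_eq_posIndex
  filter_upwards [M.eventually_norm_toEuclideanCLM_sub_lt hδ] with M' hclose hM'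
  rw [← hW]
  refine hM'.finrank_le_posIndex fun x hx hx0 => ?_
  have hx2 : 0 < ‖x‖ ^ 2 := by positivity
  rw [hermForm_eq_add_hermForm_sub M M']
  nlinarith [abs_le.1 (abs_hermForm_le (M' - M) x), hpos x hx, mul_lt_mul_of_pos_right hclose hx2]

lemma negIndex_le_of_eq_conjTranspose_mul_mul {M' : Matrix n n 𝕜} (hM : M.IsHermitian)
    (hM' : M'.IsHermitian) {C : Matrix n n 𝕜} (hC : IsUnit C) (h : M' = Cᴴ * M * C) :
    hM'.negIndex ≤ hM.negIndex := by
  obtain ⟨W, hW, δ, hδ, hneg⟩ := hM'.exists_finrank_eq_negIndex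
  have hinj : Function.Injective (toEuclideanCLM (n := n) (𝕜 := 𝕜) C) := fun x y hxy =>
    WithLp.ofLp_injective 2 <| mulVec_injective_iff_isUnit.2 hC <| by
      simpa using congrArg WithLp.ofLp hxy
  rw [← hW, LinearEquiv.finrank_eq (Submodule.equivMapOfInjective _ hinj W)]
  refine hM.finrank_le_negIndex fun y hy hy0 => ?_
  obtain ⟨x, hx, rfl⟩ := Submodule.mem_map.1 hy
  have hx0 : x ≠ 0 := by rintro rfl; simp at hy0
  have hx2 : 0 < ‖x‖ ^ 2 := by positivity
  rw [ContinuousLinearMap.coe_coe, ← hermForm_conjTranspose_mul_mul, ← h]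
  nlinarith [hneg x hx]

lemma negIndex_conjTranspose_mul_mul (hM : M.IsHermitian) {C : Matrix n n 𝕜} (hC : IsUnit C) :
    (isHermitian_conjTranspose_mul_mul C hM).negIndex = hM.negIndex := by
  refine le_antisymm (negIndex_le_of_eq_conjTranspose_mul_mul hM _ hC rfl)
    (negIndex_le_of_eq_conjTranspose_mul_mul _ hM (isUnit_nonsing_inv_iff.2 hC) ?_)
  rw [← Matrix.mul_assoc, ← Matrix.mul_assoc, ← conjTranspose_mul,
    mul_nonsing_inv _ ((isUnit_iff_isUnit_det C).1 hC), conjTranspose_one, Matrix.one_mul,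
    Matrix.mul_assoc, mul_nonsing_inv _ ((isUnit_iff_isUnit_det C).1 hC), Matrix.mul_one]

theorem negIndex_eq_of_continuousOn {α : Type*} [TopologicalSpace α] {M : α → Matrix n n 𝕜}
    (hM : ∀ t, (M t).IsHermitian) {s : Set α} (hs : IsPreconnected s) (hcont : ContinuousOn M s)
    (hdet : ∀ t ∈ s, IsUnit (M t).det) {t₀ t₁ : α} (h₀ : t₀ ∈ s) (h₁ : t₁ ∈ s) :
    (hM t₀).negIndex = (hM t₁).negIndex := by
  refine hs.constant (f := fun t => (hM t).negIndex) (fun t ht => ?_) h₀ h₁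
  rw [ContinuousWithinAt, nhds_discrete, tendsto_pure]
  filter_upwards [(hcont t ht).eventually (hM t).eventually_negIndex_le,
    (hcont t ht).eventually (hM t).eventually_posIndex_le, self_mem_nhdsWithin]
    with t' hneg hpos ht'
  have := (hM t).negIndex_add_posIndex (hdet t ht)
  have := (hM t').negIndex_add_posIndex (hdet t' ht')
  have := hneg (hM t')
  have := hpos (hM t')
  omega

end IsHermitian

variable {J A : Matrix n n 𝕜}

lemma mul_sub_smul_one_eq_conjTranspose_mul (hA : J * A = Aᴴ * J) (c : ℝ) :
    J * (A - (c : 𝕜) • 1) = (A - (c : 𝕜) • 1)ᴴ * J := by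
  rw [Matrix.mul_sub, conjTranspose_sub, Matrix.sub_mul, hA, conjTranspose_smul, conjTranspose_one,
    RCLike.star_def, RCLike.conj_ofReal, Matrix.mul_smul, Matrix.smul_mul, Matrix.mul_one,
    Matrix.one_mul]

lemma isHermitian_conjTranspose_sub_mul_mul_sub (hJ : J.IsHermitian) (hA : J * A = Aᴴ * J)
    (c d : ℝ) : ((A - (c : 𝕜) • 1)ᴴ * J * (A - (d : 𝕜) • 1)).IsHermitian := by
  have hcomm : Commute (A - (c : 𝕜) • 1) (A - (d : 𝕜) • 1) :=
    ((Commute.refl A).sub_right ((Commute.one_right A).smul_right _)).sub_left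
      ((Commute.one_left _).smul_left _)
  rw [IsHermitian, conjTranspose_mul, conjTranspose_mul, conjTranspose_conjTranspose, hJ.eq,
    ← Matrix.mul_assoc, ← mul_sub_smul_one_eq_conjTranspose_mul hA,
    ← mul_sub_smul_one_eq_conjTranspose_mul hA, Matrix.mul_assoc, Matrix.mul_assoc, hcomm.eq]

end Matrix

open Matrix

theorem stmt7 {N : ℕ} (J A : Matrix (Fin N) (Fin N) ℂ)
    (hJinv : IsUnit J.det) (hJ : J.IsHermitian) (κ : ℕ)
    (hκ : (Finset.univ.filter fun i => hJ.eigenvalues i < 0).card = κ)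
    (hA : J * A = Aᴴ * J) (a b : ℝ) (hab : a < b)
    (hspec : ∀ t ∈ Set.Icc a b, (t : ℂ) ∉ spectrum ℂ A) :
    ∃ hH : ((A - (b : ℂ) • 1)ᴴ * J * (A - (a : ℂ) • 1)).IsHermitian,
      (Finset.univ.filter fun i => hH.eigenvalues i < 0).card = κ ∧
      (Finset.univ.filter fun i => 0 < hH.eigenvalues i).card = N - κ := by
  have hinv : ∀ t ∈ Set.Icc a b, IsUnit (A - (t : ℂ) • 1) := fun t ht => by
    simpa [Algebra.algebraMap_eq_smul_one] using (spectrum.notMem_iff.1 (hspec t ht)).neg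
  let H : ℝ → Matrix (Fin N) (Fin N) ℂ := fun t => (A - (t : ℂ) • 1)ᴴ * J * (A - (a : ℂ) • 1)
  have hH : ∀ t, (H t).IsHermitian := fun t => isHermitian_conjTranspose_sub_mul_mul_sub hJ hA t a
  have ha : a ∈ Set.Icc a b := Set.left_mem_Icc.2 hab.le
  have hb : b ∈ Set.Icc a b := Set.right_mem_Icc.2 hab.le
  have hdet : ∀ t ∈ Set.Icc a b, IsUnit (H t).det := fun t ht => by
    rw [← isUnit_iff_isUnit_det]
    exact ((hinv t ht).star.mul ((isUnit_iff_isUnit_det J).2 hJinv)).mul (hinv a ha)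
  have hneg : (hH b).negIndex = κ := by
    rw [← IsHermitian.negIndex_eq_of_continuousOn hH isPreconnected_Icc (by fun_prop) hdet ha hb]
    exact (hJ.negIndex_conjTranspose_mul_mul (hinv a ha)).trans hκ
  refine ⟨hH b, hneg, ?_⟩
  have hsum := (hH b).negIndex_add_posIndex (hdet b hb)
  rw [Fintype.card_fin, hneg] at hsum
  show (hH b).posIndex = N - κ
  omega
end

section
/- Let A₁ and A₂ be selfadjoint N×N Hermitian matrices (over ℂ, with respect to the standard inner product) such that the subspace D = {x ∈ ℂᴺ : A₁x = A₂x} has codimension n. Then for every open real interval Δ, the total number of eigenvalues (counted with multiplicity) of A₁ in Δ and of A₂ in Δ differ by at most n. -/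
open Matrix

/-!
Let `V` be spanned by the eigenvectors of `A₁` with eigenvalue in `Δ`, `W` by those of `A₂` with
eigenvalue outside `Δ`, and `D = ker (A₁ - A₂)`. If `A₁` had more than `n` more eigenvalues in `Δ`
than `A₂`, dimension counting would give a nonzero `x ∈ V ⊓ W ⊓ D`. With `[a, c] ⊆ Δ` the smallest
interval containing the eigenvalues of `A₁` in `Δ`, the form `re ⟪(A - a) x, (A - c) x⟫` is `≤ 0`
for `A = A₁` (since `x ∈ V`) and `> 0` for `A = A₂` (since `x ∈ W`), yet the two agree as
`A₁ x = A₂ x`.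
-/

open Module Submodule

theorem sub_mul_sub_nonpos_of_mem_Icc {α : Type*} [Ring α] [LinearOrder α] [IsStrictOrderedRing α]
    {a c x : α} (h : x ∈ Set.Icc a c) : (x - a) * (x - c) ≤ 0 :=
  mul_nonpos_of_nonneg_of_nonpos (sub_nonneg.2 h.1) (sub_nonpos.2 h.2)

theorem sub_mul_sub_pos_of_notMem_Icc {α : Type*} [Ring α] [LinearOrder α] [IsStrictOrderedRing α]
    {a c x : α} (hac : a ≤ c) (h : x ∉ Set.Icc a c) : 0 < (x - a) * (x - c) := by
  rcases not_and_or.1 h with h | h <;> rw [not_le] at h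
  · exact mul_pos_of_neg_of_neg (sub_neg.2 h) (sub_neg.2 (h.trans_le hac))
  · exact mul_pos (sub_pos.2 (hac.trans_lt h)) (sub_pos.2 h)

theorem Submodule.finrank_add_finrank_le_finrank_inf_add {K V : Type*} [DivisionRing K]
    [AddCommGroup V] [Module K V] [FiniteDimensional K V] (s t : Submodule K V) :
    finrank K s + finrank K t ≤ finrank K ↥(s ⊓ t) + finrank K V := by
  rw [← finrank_sup_add_finrank_inf_eq, add_comm]
  exact Nat.add_le_add_left (finrank_le _) _

namespace OrthonormalBasis

variable {𝕜 E ι : Type*} [RCLike 𝕜] [NormedAddCommGroup E] [InnerProductSpace 𝕜 E] [Fintype ι]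
  {b : OrthonormalBasis ι 𝕜 E}

theorem finrank_span_image (s : Finset ι) : finrank 𝕜 (span 𝕜 (b '' s)) = s.card := by
  have hli : LinearIndependent 𝕜 fun i : (s : Set ι) => b i :=
    b.orthonormal.linearIndependent.comp _ Subtype.val_injective
  rw [Set.image_eq_range, finrank_span_eq_card hli]
  simp

theorem repr_eq_zero_of_mem_span_image {s : Set ι} {x : E} (hx : x ∈ span 𝕜 (b '' s)) {i : ι}
    (hi : i ∉ s) : b.repr x i = 0 := by
  rw [← b.coe_toBasis, b.toBasis.mem_span_image] at hx
  rw [← b.coe_toBasis_repr_apply]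
  exact Finsupp.notMem_support_iff.1 fun h => hi (hx h)

theorem sum_mul_norm_sq_repr_nonpos {s : Set ι} {x : E} (hx : x ∈ span 𝕜 (b '' s)) {f : ι → ℝ}
    (hf : ∀ i ∈ s, f i ≤ 0) : ∑ i, f i * ‖b.repr x i‖ ^ 2 ≤ 0 := by
  refine Finset.sum_nonpos fun i _ => ?_
  by_cases hi : i ∈ s
  · exact mul_nonpos_of_nonpos_of_nonneg (hf i hi) (by positivity)
  · simp [repr_eq_zero_of_mem_span_image hx hi]

theorem sum_mul_norm_sq_repr_pos {s : Set ι} {x : E} (hx : x ∈ span 𝕜 (b '' s)) (hx0 : x ≠ 0)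
    {f : ι → ℝ} (hf : ∀ i ∈ s, 0 < f i) : 0 < ∑ i, f i * ‖b.repr x i‖ ^ 2 := by
  obtain ⟨i, hi⟩ : ∃ i, b.repr x i ≠ 0 := by
    by_contra! h
    exact hx0 (b.repr.map_eq_zero_iff.1 (by ext i; exact h i))
  have his : i ∈ s := by_contra fun his => hi (repr_eq_zero_of_mem_span_image hx his)
  refine Finset.sum_pos' (fun j _ => ?_) ⟨i, Finset.mem_univ i, by positivity [hf i his]⟩
  by_cases hj : j ∈ s
  · exact mul_nonneg (hf j hj).le (by positivity)
  · simp [repr_eq_zero_of_mem_span_image hx hj]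

variable {T : E →ₗ[𝕜] E} {μ : ι → ℝ}

theorem repr_apply_eq_mul_of_apply_eq_smul (hb : ∀ i, T (b i) = (μ i : 𝕜) • b i) (x : E)
    (i : ι) : b.repr (T x) i = μ i * b.repr x i := by
  classical
  conv_lhs => rw [← b.sum_repr x]
  simp [map_sum, hb, smul_smul, Finset.sum_apply, Pi.single_apply, mul_comm]

open RCLike in
theorem re_inner_sub_smul_sub_smul_eq_sum (hb : ∀ i, T (b i) = (μ i : 𝕜) • b i) (a c : ℝ)
    (x : E) : re (inner 𝕜 (T x - (a : 𝕜) • x) (T x - (c : 𝕜) • x)) =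
      ∑ i, (μ i - a) * (μ i - c) * ‖b.repr x i‖ ^ 2 := by
  rw [← b.repr.inner_map_map, PiLp.inner_apply, map_sum]
  refine Finset.sum_congr rfl fun i _ => ?_
  simp only [map_sub, map_smul, PiLp.sub_apply, PiLp.smul_apply,
    repr_apply_eq_mul_of_apply_eq_smul hb, smul_eq_mul, ← sub_mul]
  rw [← ofReal_sub, ← ofReal_sub, inner_apply, map_mul (starRingEnd 𝕜), conj_ofReal,
    mul_mul_mul_comm, mul_conj, ← ofReal_pow, ← ofReal_mul, ← ofReal_mul, ofReal_re]
  ring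

end OrthonormalBasis

open OrthonormalBasis in
theorem card_filter_mem_add_finrank_le {𝕜 E ι κ : Type*} [RCLike 𝕜] [NormedAddCommGroup E]
    [InnerProductSpace 𝕜 E] [Fintype ι] [Fintype κ] {T₁ T₂ : E →ₗ[𝕜] E}
    {b₁ : OrthonormalBasis ι 𝕜 E} {b₂ : OrthonormalBasis κ 𝕜 E} {μ₁ : ι → ℝ} {μ₂ : κ → ℝ}
    (hb₁ : ∀ i, T₁ (b₁ i) = (μ₁ i : 𝕜) • b₁ i) (hb₂ : ∀ j, T₂ (b₂ j) = (μ₂ j : 𝕜) • b₂ j)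
    {D : Submodule 𝕜 E} (hD : ∀ x ∈ D, T₁ x = T₂ x) {Δ : Set ℝ} [DecidablePred (· ∈ Δ)]
    (hΔ : Δ.OrdConnected) :
    (Finset.univ.filter fun i => μ₁ i ∈ Δ).card + finrank 𝕜 D ≤
      (Finset.univ.filter fun j => μ₂ j ∈ Δ).card + finrank 𝕜 E := by
  set s₁ := Finset.univ.filter fun i => μ₁ i ∈ Δ
  set s₂ := Finset.univ.filter fun j => μ₂ j ∉ Δ
  have : FiniteDimensional 𝕜 E := b₁.toBasis.finiteDimensional_of_finite
  by_contra! hlt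
  have hs₂ : (Finset.univ.filter fun j => μ₂ j ∈ Δ).card + s₂.card = finrank 𝕜 E := by
    rw [Finset.card_filter_add_card_filter_not, Finset.card_univ, finrank_eq_card_basis b₂.toBasis]
  have hs₁ : s₁.Nonempty := Finset.card_pos.1 (by linarith [finrank_le D])
  obtain ⟨i₀, hi₀, hmin⟩ := s₁.exists_min_image μ₁ hs₁
  obtain ⟨k₀, hk₀, hmax⟩ := s₁.exists_max_image μ₁ hs₁
  have hIcc : Set.Icc (μ₁ i₀) (μ₁ k₀) ⊆ Δ :=
    hΔ.out (Finset.mem_filter.1 hi₀).2 (Finset.mem_filter.1 hk₀).2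
  set V := span 𝕜 (b₁ '' s₁)
  set W := span 𝕜 (b₂ '' s₂)
  have hVWD : V ⊓ W ⊓ D ≠ ⊥ := by
    intro h
    have hVW := finrank_add_finrank_le_finrank_inf_add V W
    have hVWD := finrank_add_finrank_le_finrank_inf_add (V ⊓ W) D
    rw [b₁.finrank_span_image, b₂.finrank_span_image] at hVW
    rw [h, finrank_bot] at hVWD
    omega
  obtain ⟨x, ⟨⟨hxV, hxW⟩, hxD⟩, hx0⟩ := exists_mem_ne_zero_of_ne_bot hVWD
  have hq₁ : ∑ i, (μ₁ i - μ₁ i₀) * (μ₁ i - μ₁ k₀) * ‖b₁.repr x i‖ ^ 2 ≤ 0 :=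
    sum_mul_norm_sq_repr_nonpos hxV fun i hi =>
      sub_mul_sub_nonpos_of_mem_Icc ⟨hmin i hi, hmax i hi⟩
  have hq₂ : 0 < ∑ j, (μ₂ j - μ₁ i₀) * (μ₂ j - μ₁ k₀) * ‖b₂.repr x j‖ ^ 2 :=
    sum_mul_norm_sq_repr_pos hxW hx0 fun j hj =>
      sub_mul_sub_pos_of_notMem_Icc (hmin k₀ hk₀)
        fun hmem => (Finset.mem_filter.1 hj).2 (hIcc hmem)
  rw [← re_inner_sub_smul_sub_smul_eq_sum hb₁] at hq₁
  rw [← re_inner_sub_smul_sub_smul_eq_sum hb₂, ← hD x hxD] at hq₂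
  exact hq₁.not_gt hq₂

theorem Matrix.IsHermitian.toEuclideanLin_eigenvectorBasis {𝕜 n : Type*} [RCLike 𝕜] [Fintype n]
    [DecidableEq n] {A : Matrix n n 𝕜} (hA : A.IsHermitian) (i : n) :
    toEuclideanLin A (hA.eigenvectorBasis i) = (hA.eigenvalues i : 𝕜) • hA.eigenvectorBasis i := by
  rw [toLpLin_apply, hA.mulVec_eigenvectorBasis, RCLike.real_smul_eq_coe_smul (K := 𝕜)]
  rfl

theorem Matrix.finrank_ker_toLpLin {R m n : Type*} [CommRing R] [Fintype n] [DecidableEq n]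
    (p q : ENNReal) (A : Matrix m n R) :
    finrank R (LinearMap.ker (toLpLin p q A)) = finrank R (LinearMap.ker (toLin' A)) := by
  have hker : LinearMap.ker (toLpLin p q A) = (LinearMap.ker (toLin' A)).map
      ((WithLp.linearEquiv p R (n → R)).symm : (n → R) →ₗ[R] WithLp p (n → R)) := by
    rw [Submodule.map_equiv_eq_comap_symm]
    ext x
    simp [toLpLin_apply]
  rw [hker, LinearEquiv.finrank_map_eq]

open scoped Classical in
theorem stmt8_general {N : ℕ} (A₁ A₂ : Matrix (Fin N) (Fin N) ℂ)
    (h₁ : A₁.IsHermitian) (h₂ : A₂.IsHermitian) (n : ℕ)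
    (hn : N - Module.finrank ℂ (LinearMap.ker (Matrix.toLin' (A₁ - A₂))) = n)
    (Δ : Set ℝ) (hΔconn : Δ.OrdConnected) :
    ((Finset.univ.filter fun i => h₁.eigenvalues i ∈ Δ).card : ℤ) -
      (Finset.univ.filter fun i => h₂.eigenvalues i ∈ Δ).card ∈ Set.Icc (-(n : ℤ)) n := by
  set D := LinearMap.ker (toEuclideanLin (A₁ - A₂))
  have hD : ∀ x ∈ D, toEuclideanLin A₁ x = toEuclideanLin A₂ x := fun x hx => by
    simpa [D, sub_eq_zero] using hx
  have hDn : finrank ℂ D + n = N := by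
    have hle := (LinearMap.ker (toLin' (A₁ - A₂))).finrank_le
    rw [finrank_fin_fun] at hle
    rw [finrank_ker_toLpLin]
    omega
  have h₁₂ := card_filter_mem_add_finrank_le h₁.toEuclideanLin_eigenvectorBasis
    h₂.toEuclideanLin_eigenvectorBasis hD hΔconn
  have h₂₁ := card_filter_mem_add_finrank_le h₂.toEuclideanLin_eigenvectorBasis
    h₁.toEuclideanLin_eigenvectorBasis (fun x hx => (hD x hx).symm) hΔconn
  rw [finrank_euclideanSpace_fin] at h₁₂ h₂₁
  rw [Set.mem_Icc]
  omega

open scoped Classical in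
theorem stmt8 {N : ℕ} (A₁ A₂ : Matrix (Fin N) (Fin N) ℂ)
    (h₁ : A₁.IsHermitian) (h₂ : A₂.IsHermitian) (n : ℕ)
    (hn : N - Module.finrank ℂ (LinearMap.ker (Matrix.toLin' (A₁ - A₂))) = n)
    (Δ : Set ℝ) (hΔopen : IsOpen Δ) (hΔconn : Δ.OrdConnected) :
    ((Finset.univ.filter fun i => h₁.eigenvalues i ∈ Δ).card : ℤ) -
      (Finset.univ.filter fun i => h₂.eigenvalues i ∈ Δ).card ∈ Set.Icc (-(n : ℤ)) n :=
  stmt8_general A₁ A₂ h₁ h₂ n hn Δ hΔconn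
end

section
/- Let J be an invertible Hermitian N×N complex matrix with exactly κ negative eigenvalues, and let A₁, A₂ be J-selfadjoint N×N matrices (J·Aⱼ = Aⱼᴴ·J) such that the subspace D = {x ∈ ℂᴺ : A₁x = A₂x} has codimension n in ℂᴺ. Assume all eigenvalues of A₁ and A₂ are real and semisimple (both matrices are diagonalizable). Then for every open real interval Δ, the total multiplicities of the eigenvalues of A₁ in Δ and of A₂ in Δ differ by at most n + 2κ. -/
open Matrix

/-- `A` is diagonalizable (all eigenvalues semisimple). -/
def Diagonalizable {N : ℕ} (A : Matrix (Fin N) (Fin N) ℂ) : Prop :=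
  ∃ P D : Matrix (Fin N) (Fin N) ℂ, IsUnit P.det ∧ D.IsDiag ∧ A = P * D * P⁻¹

/-- Total multiplicity of the eigenvalues of `A` in the real set `Δ`
(for a diagonalizable matrix this is the sum of the algebraic multiplicities). -/
noncomputable def eigCount {N : ℕ} (A : Matrix (Fin N) (Fin N) ℂ) (Δ : Set ℝ) : ℕ :=
  Module.finrank ℂ ↥(⨆ μ ∈ Δ, Module.End.eigenspace (Matrix.toLin' A) (μ : ℂ))

/-!
Write `[x, y] = x* J y`. Eigenvectors of a `J`-selfadjoint matrix `A` for distinct real eigenvalues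
are `[·,·]`-orthogonal, so if a real polynomial `p` satisfies `p = f²` on `S`, then on the span
`L_S(A)` of the eigenvectors with eigenvalue in `S` the form `[x, p(A) x]` equals
`[f(A) x, f(A) x]`. As `J` is positive definite on a subspace of codimension `κ`, this makes
`[x, p(A) x]` positive definite on a subspace of `L_Δ(A₁)` of codimension at most `κ` if `p > 0`
on `Δ`, and negative semidefinite on a subspace of `L_{ℝ ∖ Δ}(A₂)` of codimension at most `κ` if
`p ≤ 0` off `Δ`. An open interval is exactly the positivity set of some `p` of degree at most two,
and then `[x, p(A) x] = α [x, x] + β [x, A x] + γ [A x, A x]` only depends on `x` and `A x`: the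
two forms agree on `ker (A₁ - A₂)`, which has codimension `n`. Hence these three subspaces meet
only in `0`, and counting dimensions gives `eigCount A₁ Δ ≤ eigCount A₂ Δ + n + 2κ`.
-/

open Finset

section Finrank

variable {K V : Type*} [Field K] [AddCommGroup V] [Module K V] [FiniteDimensional K V]

/-- The preimage `P.comap T` has codimension at most that of `P`. -/
theorem Submodule.finrank_add_finrank_le_finrank_inf_comap_add (U P : Submodule K V)
    (T : V →ₗ[K] V) :
    Module.finrank K U + Module.finrank K P
      ≤ Module.finrank K ↥(U ⊓ P.comap T) + Module.finrank K V := by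
  have h₁ := (P.mkQ ∘ₗ T).finrank_range_add_finrank_ker
  have h₂ := (LinearMap.range (P.mkQ ∘ₗ T)).finrank_le
  have h₃ := P.finrank_quotient_add_finrank
  have h₄ := Submodule.finrank_sup_add_finrank_inf_eq U (P.comap T)
  have h₅ := (U ⊔ P.comap T).finrank_le
  rw [LinearMap.ker_comp, Submodule.ker_mkQ] at h₁
  omega

theorem Submodule.finrank_add_finrank_add_finrank_le_of_inf_eq_bot {U W X : Submodule K V}
    (h : U ⊓ W ⊓ X = ⊥) :
    Module.finrank K U + Module.finrank K W + Module.finrank K X ≤ 2 * Module.finrank K V := by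
  have h₁ := Submodule.finrank_sup_add_finrank_inf_eq U W
  have h₂ := Submodule.finrank_sup_add_finrank_inf_eq (U ⊓ W) X
  have h₃ := (U ⊔ W).finrank_le
  have h₄ := (U ⊓ W ⊔ X).finrank_le
  rw [h, finrank_bot] at h₂
  omega

end Finrank

lemma exists_quadratic_pos_iff_mem {Δ : Set ℝ} (ho : IsOpen Δ) (hc : Δ.OrdConnected) :
    ∃ α β γ : ℝ, ∀ t, 0 < α + β * t + γ * t ^ 2 ↔ t ∈ Δ := by
  rcases Δ.eq_empty_or_nonempty with rfl | hne
  · exact ⟨-1, 0, 0, fun t => by norm_num⟩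
  obtain ⟨a, b, hΔ⟩ : ∃ a b : ℝ,
      Δ = Set.Ioo a b ∨ Δ = Set.Ioi a ∨ Δ = Set.Iio b ∨ Δ = Set.univ := by
    have h := hc.isPreconnected.mem_intervals
    refine ⟨sInf Δ, sSup Δ, ?_⟩
    generalize sInf Δ = a at h
    generalize sSup Δ = b at h
    simp only [Set.mem_insert_iff, Set.mem_singleton_iff] at h
    -- as `interior Δ = Δ`, the closed ends of the intervals become open
    rcases h with h | h | h | h | h | h | h | h | h | h <;>
      first
      | (rw [← ho.interior_eq, h]; simp; done)
      | simp [h] at hne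
  rcases hΔ with rfl | rfl | rfl | rfl
  · have hab : a < b := Set.nonempty_Ioo.mp hne
    refine ⟨-(a * b), a + b, -1, fun t => ⟨fun h => ?_, fun ⟨h₁, h₂⟩ => by nlinarith⟩⟩
    by_contra hout
    rcases le_or_gt t a with h' | h'
    · nlinarith
    · exact hout ⟨h', by nlinarith⟩
  · exact ⟨-a, 1, 0, fun t => by rw [Set.mem_Ioi]; constructor <;> intro h <;> linarith⟩
  · exact ⟨b, -1, 0, fun t => by rw [Set.mem_Iio]; constructor <;> intro h <;> linarith⟩
  · exact ⟨1, 0, 0, fun t => by norm_num⟩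

namespace IndefiniteForm

variable {m : Type*} [Fintype m]

noncomputable def jForm (J : Matrix m m ℂ) : (m → ℂ) →ₗ⋆[ℂ] (m → ℂ) →ₗ[ℂ] ℂ :=
  LinearMap.mk₂'ₛₗ (starRingEnd ℂ) (RingHom.id ℂ) (fun x y => star x ⬝ᵥ (J *ᵥ y))
    (fun x x' y => by simp only [star_add, add_dotProduct])
    (fun c x y => by simp only [star_smul, smul_dotProduct]; rfl)
    (fun x y y' => by simp only [mulVec_add, dotProduct_add])
    (fun c x y => by simp only [mulVec_smul, dotProduct_smul]; rfl)

lemma jForm_apply (J : Matrix m m ℂ) (x y : m → ℂ) : jForm J x y = star x ⬝ᵥ (J *ᵥ y) := rfl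

lemma jForm_sum_smul {ι κ : Type*} [Fintype ι] [Fintype κ] (J : Matrix m m ℂ) (a : ι → ℂ)
    (u : ι → m → ℂ) (b : κ → ℂ) (w : κ → m → ℂ) :
    jForm J (∑ i, a i • u i) (∑ j, b j • w j)
      = ∑ i, ∑ j, star (a i) * b j * jForm J (u i) (w j) := by
  rw [LinearMap.map_sum₂]
  refine Finset.sum_congr rfl fun i _ => ?_
  rw [map_sum]
  refine Finset.sum_congr rfl fun j _ => ?_
  rw [LinearMap.map_smulₛₗ₂, map_smul, smul_eq_mul, smul_eq_mul, Complex.star_def]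
  ring

variable {J A : Matrix m m ℂ}

lemma jForm_mulVec_swap (hA : J * A = Aᴴ * J) (x y : m → ℂ) :
    jForm J (A *ᵥ x) y = jForm J x (A *ᵥ y) := by
  rw [jForm_apply, jForm_apply, star_mulVec, ← dotProduct_mulVec, mulVec_mulVec, mulVec_mulVec,
    hA]

lemma jForm_eq_zero_of_eigenvalue_ne (hA : J * A = Aᴴ * J) {x y : m → ℂ} {μ ν : ℝ}
    (hx : A *ᵥ x = (μ : ℂ) • x) (hy : A *ᵥ y = (ν : ℂ) • y) (hμν : μ ≠ ν) :
    jForm J x y = 0 := by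
  have h := jForm_mulVec_swap hA x y
  rw [hx, hy, map_smulₛₗ, LinearMap.smul_apply, map_smul, Complex.conj_ofReal, smul_eq_mul,
    smul_eq_mul] at h
  have : ((μ : ℂ) - ν) * jForm J x y = 0 := by linear_combination h
  exact (mul_eq_zero.mp this).resolve_left (sub_ne_zero.mpr (by exact_mod_cast hμν))

lemma re_jForm_self_eq_sum [DecidableEq m] (hJ : J.IsHermitian) (x : m → ℂ) :
    (jForm J x x).re = ∑ i, hJ.eigenvalues i *
      Complex.normSq ((star (hJ.eigenvectorUnitary : Matrix m m ℂ) *ᵥ x) i) := by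
  set U : Matrix m m ℂ := ↑hJ.eigenvectorUnitary
  have hJU : J = U * diagonal (RCLike.ofReal ∘ hJ.eigenvalues) * star U := by
    conv_lhs => rw [hJ.spectral_theorem]
    rfl
  have hxU : star x ᵥ* U = star (star U *ᵥ x) := by
    rw [star_mulVec, star_eq_conjTranspose, conjTranspose_conjTranspose]
  rw [jForm_apply]
  conv_lhs => rw [hJU, ← mulVec_mulVec, ← mulVec_mulVec, dotProduct_mulVec, hxU]
  simp only [dotProduct, mulVec_diagonal, Complex.re_sum, Function.comp_apply, Pi.star_apply]
  refine Finset.sum_congr rfl fun i _ => ?_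
  simp [Complex.normSq_apply]
  ring

lemma _root_.Matrix.IsHermitian.eigenvalues_ne_zero_s9 [DecidableEq m] (hJ : J.IsHermitian)
    (hJinv : IsUnit J.det) (i : m) : hJ.eigenvalues i ≠ 0 := by
  have h : ∏ i, (hJ.eigenvalues i : ℂ) ≠ 0 := hJ.det_eq_prod_eigenvalues ▸ hJinv.ne_zero
  exact_mod_cast Finset.prod_ne_zero_iff.mp h i (Finset.mem_univ i)

lemma exists_posDef_subspace [DecidableEq m] (hJinv : IsUnit J.det) (hJ : J.IsHermitian) :
    ∃ P : Submodule ℂ (m → ℂ),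
      Fintype.card m ≤ Module.finrank ℂ P + #{i | hJ.eigenvalues i < 0} ∧
      ∀ x ∈ P, x ≠ 0 → 0 < (jForm J x x).re := by
  set U : Matrix m m ℂ := ↑hJ.eigenvectorUnitary
  let L : (m → ℂ) →ₗ[ℂ] ({i // hJ.eigenvalues i < 0} → ℂ) :=
    LinearMap.funLeft ℂ ℂ Subtype.val ∘ₗ toLin' (star U)
  -- the span of the eigenvectors of `J` with positive eigenvalue
  refine ⟨LinearMap.ker L, ?_, fun x hx hx0 => ?_⟩
  · have h := L.finrank_range_add_finrank_ker
    have hrange := Submodule.finrank_le (LinearMap.range L)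
    rw [Module.finrank_fintype_fun_eq_card, Fintype.card_subtype] at hrange
    rw [Module.finrank_fintype_fun_eq_card] at h
    omega
  set y := star U *ᵥ x
  have hy : ∀ i, hJ.eigenvalues i < 0 → y i = 0 := fun i hi => congr_fun hx ⟨i, hi⟩
  have hy0 : y ≠ 0 := by
    rintro h
    apply hx0
    rw [← one_mulVec x, ← Unitary.coe_mul_star_self hJ.eigenvectorUnitary, ← mulVec_mulVec]
    exact (congrArg _ h).trans (mulVec_zero _)
  obtain ⟨i, hi⟩ : ∃ i, y i ≠ 0 := Function.ne_iff.mp hy0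
  have hterm : ∀ j, 0 ≤ hJ.eigenvalues j * Complex.normSq (y j) := fun j => by
    rcases lt_or_ge (hJ.eigenvalues j) 0 with h | h
    · simp [hy j h]
    · exact mul_nonneg h (Complex.normSq_nonneg _)
  have hpos : 0 < hJ.eigenvalues i :=
    lt_of_le_of_ne (not_lt.mp fun h => hi (hy i h)) (hJ.eigenvalues_ne_zero_s9 hJinv i).symm
  rw [re_jForm_self_eq_sum hJ]
  exact Finset.sum_pos' (fun j _ => hterm j)
    ⟨i, Finset.mem_univ i, mul_pos hpos (Complex.normSq_pos.mpr hi)⟩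

/-- `Re [x, p(A) x]` for `p(t) = α + β t + γ t²` and `J`-selfadjoint `A`, written through `x` and
`A x` only. -/
noncomputable def polyForm (J A : Matrix m m ℂ) (α β γ : ℝ) (x : m → ℂ) : ℝ :=
  ((α : ℂ) * jForm J x x + (β : ℂ) * jForm J x (A *ᵥ x) + (γ : ℂ) * jForm J (A *ᵥ x) (A *ᵥ x)).re

lemma polyForm_neg (J A : Matrix m m ℂ) (α β γ : ℝ) (x : m → ℂ) :
    polyForm J A (-α) (-β) (-γ) x = -polyForm J A α β γ x := by
  simp only [polyForm, Complex.ofReal_neg, neg_mul, ← neg_add, Complex.neg_re]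

lemma polyForm_eq_of_mulVec_eq {A₁ A₂ : Matrix m m ℂ} (α β γ : ℝ) {x : m → ℂ}
    (h : A₁ *ᵥ x = A₂ *ᵥ x) : polyForm J A₁ α β γ x = polyForm J A₂ α β γ x := by
  rw [polyForm, polyForm, h]

section EigenScale

variable {V ι : Type*} [AddCommGroup V] [Module ℂ V] (v : Module.Basis ι ℂ V) (d : ι → ℝ)

/-- The operator `f(A)` for `A` diagonal in the basis `v` with eigenvalues `d`. -/
noncomputable def eigenScale (f : ℝ → ℝ) : V →ₗ[ℂ] V :=
  v.constr ℂ fun i => (f (d i) : ℂ) • v i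

lemma eigenScale_basis (f : ℝ → ℝ) (i : ι) : eigenScale v d f (v i) = (f (d i) : ℂ) • v i :=
  v.constr_basis ℂ _ i

lemma eigenScale_apply [Fintype ι] (f : ℝ → ℝ) (x : V) :
    eigenScale v d f x = ∑ i, ((f (d i) : ℂ) * v.repr x i) • v i := by
  rw [eigenScale, Module.Basis.constr_apply_fintype]
  simp only [v.equivFun_apply, smul_smul, mul_comm]

lemma repr_eigenScale [Fintype ι] (f : ℝ → ℝ) (x : V) (i : ι) :
    v.repr (eigenScale v d f x) i = f (d i) * v.repr x i := by
  rw [eigenScale_apply, ← v.equivFun_symm_apply, ← v.equivFun_apply,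
    LinearEquiv.apply_symm_apply]

end EigenScale

section Spectral

variable [DecidableEq m]

def spectralSubspace (A : Matrix m m ℂ) (S : Set ℝ) : Submodule ℂ (m → ℂ) :=
  ⨆ μ ∈ S, Module.End.eigenspace (toLin' A) (μ : ℂ)

variable {ι : Type*} {v : Module.Basis ι ℂ (m → ℂ)} {d : ι → ℝ}

lemma mulVec_eq_eigenScale (hv : ∀ i, A *ᵥ v i = (d i : ℂ) • v i) (x : m → ℂ) :
    A *ᵥ x = eigenScale v d id x := by
  rw [← toLin'_apply]
  exact LinearMap.congr_fun (v.ext fun i => by rw [toLin'_apply, hv, eigenScale_basis]; rfl) x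

lemma repr_mulVec [Fintype ι] (hv : ∀ i, A *ᵥ v i = (d i : ℂ) • v i) (x : m → ℂ) (i : ι) :
    v.repr (A *ᵥ x) i = d i * v.repr x i := by
  rw [mulVec_eq_eigenScale hv, repr_eigenScale]
  rfl

lemma spectralSubspace_eq_span [Fintype ι] (hv : ∀ i, A *ᵥ v i = (d i : ℂ) • v i) (S : Set ℝ) :
    spectralSubspace A S = Submodule.span ℂ (v '' {i | d i ∈ S}) := by
  refine le_antisymm (iSup₂_le fun t ht x hx => ?_) ?_
  · rw [Module.End.mem_eigenspace_iff, toLin'_apply] at hx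
    rw [Module.Basis.mem_span_image]
    intro i hi
    have h := repr_mulVec hv x i
    rw [hx, map_smul, Finsupp.smul_apply, smul_eq_mul] at h
    have hdt : (d i : ℂ) = t := mul_right_cancel₀ (Finsupp.mem_support_iff.mp hi) h.symm
    exact (Complex.ofReal_injective hdt ▸ ht : d i ∈ S)
  · rw [Submodule.span_le]
    rintro _ ⟨i, hi, rfl⟩
    refine Submodule.mem_iSup_of_mem (d i) (Submodule.mem_iSup_of_mem hi ?_)
    rw [Module.End.mem_eigenspace_iff, toLin'_apply, hv]

lemma mem_spectralSubspace_iff [Fintype ι] (hv : ∀ i, A *ᵥ v i = (d i : ℂ) • v i) {S : Set ℝ}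
    {x : m → ℂ} : x ∈ spectralSubspace A S ↔ ∀ i, d i ∉ S → v.repr x i = 0 := by
  rw [spectralSubspace_eq_span hv, Module.Basis.mem_span_image]
  refine ⟨fun h i hi => ?_, fun h i hi => ?_⟩
  · by_contra hne
    exact hi (h (Finsupp.mem_support_iff.mpr hne))
  · by_contra hne
    exact Finsupp.mem_support_iff.mp hi (h i hne)

lemma finrank_spectralSubspace [Fintype ι] (hv : ∀ i, A *ᵥ v i = (d i : ℂ) • v i) (S : Set ℝ)
    [DecidablePred (· ∈ S)] : Module.finrank ℂ (spectralSubspace A S) = #{i | d i ∈ S} := by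
  have hli : LinearIndependent ℂ (fun i : {i | d i ∈ S} => v i) :=
    v.linearIndependent.comp _ Subtype.val_injective
  rw [spectralSubspace_eq_span hv, Set.image_eq_range, finrank_span_eq_card hli]
  exact Fintype.card_subtype _

lemma polyForm_eq_re_jForm_eigenScale [Fintype ι] (hA : J * A = Aᴴ * J)
    (hv : ∀ i, A *ᵥ v i = (d i : ℂ) • v i) {S : Set ℝ} {α β γ : ℝ} {f : ℝ → ℝ}
    (hf : ∀ t ∈ S, α + β * t + γ * t ^ 2 = f t ^ 2) {x : m → ℂ}
    (hx : x ∈ spectralSubspace A S) :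
    polyForm J A α β γ x = (jForm J (eigenScale v d f x) (eigenScale v d f x)).re := by
  obtain ⟨c, hc⟩ : ∃ c, ⇑(v.repr x) = c := ⟨_, rfl⟩
  have hcS : ∀ j, c j ≠ 0 → d j ∈ S := fun j hj => by
    by_contra h
    exact hj (hc ▸ (mem_spectralSubspace_iff hv).mp hx j h)
  have hAx : A *ᵥ x = ∑ i, ((d i : ℂ) * c i) • v i := by
    rw [mulVec_eq_eigenScale hv, eigenScale_apply, ← hc]
    rfl
  have hx' : x = ∑ i, c i • v i := by
    rw [← hc]
    exact (v.sum_repr x).symm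
  rw [polyForm, eigenScale_apply, hc, hAx, hx']
  simp only [jForm_sum_smul, Finset.mul_sum, ← Finset.sum_add_distrib]
  congr 1
  refine Finset.sum_congr rfl fun i _ => Finset.sum_congr rfl fun j _ => ?_
  by_cases hij : d i = d j
  · by_cases hcj : c j = 0
    · simp [hcj]
    have hfj : ((α + β * d j + γ * d j ^ 2 : ℝ) : ℂ) = ((f (d j) ^ 2 : ℝ) : ℂ) :=
      congrArg _ (hf _ (hcS j hcj))
    push_cast at hfj
    simp only [hij, Complex.star_def, map_mul, Complex.conj_ofReal]
    linear_combination (starRingEnd ℂ (c i) * c j * jForm J (v i) (v j)) * hfj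
  · simp [jForm_eq_zero_of_eigenvalue_ne hA (hv i) (hv j) hij]

lemma eigenScale_ne_zero [Fintype ι] (hv : ∀ i, A *ᵥ v i = (d i : ℂ) • v i) {S : Set ℝ}
    {f : ℝ → ℝ} (hf : ∀ t ∈ S, f t ≠ 0) {x : m → ℂ} (hx : x ∈ spectralSubspace A S)
    (hx0 : x ≠ 0) : eigenScale v d f x ≠ 0 := by
  contrapose! hx0
  refine v.repr.injective (Finsupp.ext fun i => ?_)
  have h := repr_eigenScale v d f x i
  rw [hx0, map_zero, Finsupp.coe_zero, Pi.zero_apply] at h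
  rw [map_zero, Finsupp.coe_zero, Pi.zero_apply]
  by_cases hi : d i ∈ S
  · exact (mul_eq_zero.mp h.symm).resolve_left (by exact_mod_cast hf _ hi)
  · exact (mem_spectralSubspace_iff hv).mp hx i hi

lemma finrank_spectralSubspace_add_finrank_compl [Fintype ι]
    (hv : ∀ i, A *ᵥ v i = (d i : ℂ) • v i) (S : Set ℝ) :
    Module.finrank ℂ (spectralSubspace A S) + Module.finrank ℂ (spectralSubspace A Sᶜ)
      = Fintype.card ι := by
  classical
  rw [finrank_spectralSubspace hv, finrank_spectralSubspace hv]
  simpa only [Set.mem_compl_iff, card_univ] using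
    card_filter_add_card_filter_not (s := univ) (d · ∈ S)

variable {P : Submodule ℂ (m → ℂ)}

lemma exists_polyForm_pos_subspace [Fintype ι] (hA : J * A = Aᴴ * J)
    (hv : ∀ i, A *ᵥ v i = (d i : ℂ) • v i) (hP : ∀ x ∈ P, x ≠ 0 → 0 < (jForm J x x).re)
    {S : Set ℝ} {α β γ : ℝ} (hS : ∀ t ∈ S, 0 < α + β * t + γ * t ^ 2) :
    ∃ W : Submodule ℂ (m → ℂ),
      Module.finrank ℂ (spectralSubspace A S) + Module.finrank ℂ P
        ≤ Module.finrank ℂ W + Fintype.card m ∧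
      ∀ x ∈ W, x ≠ 0 → 0 < polyForm J A α β γ x := by
  set T := eigenScale v d fun t => √(α + β * t + γ * t ^ 2) with hT
  refine ⟨spectralSubspace A S ⊓ P.comap T, ?_, fun x ⟨hxS, hxP⟩ hx0 => ?_⟩
  · rw [← Module.finrank_fintype_fun_eq_card ℂ]
    exact Submodule.finrank_add_finrank_le_finrank_inf_comap_add _ _ _
  rw [polyForm_eq_re_jForm_eigenScale hA hv (f := fun t => √(α + β * t + γ * t ^ 2))
    (fun t ht => (Real.sq_sqrt (hS t ht).le).symm) hxS, ← hT]
  exact hP _ hxP (eigenScale_ne_zero hv (fun t ht => Real.sqrt_ne_zero'.2 (hS t ht)) hxS hx0)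

lemma exists_polyForm_nonpos_subspace [Fintype ι] (hA : J * A = Aᴴ * J)
    (hv : ∀ i, A *ᵥ v i = (d i : ℂ) • v i) (hP : ∀ x ∈ P, 0 ≤ (jForm J x x).re)
    {S : Set ℝ} {α β γ : ℝ} (hS : ∀ t ∈ S, α + β * t + γ * t ^ 2 ≤ 0) :
    ∃ W : Submodule ℂ (m → ℂ),
      Module.finrank ℂ (spectralSubspace A S) + Module.finrank ℂ P
        ≤ Module.finrank ℂ W + Fintype.card m ∧
      ∀ x ∈ W, polyForm J A α β γ x ≤ 0 := by
  set T := eigenScale v d fun t => √(-(α + β * t + γ * t ^ 2)) with hT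
  refine ⟨spectralSubspace A S ⊓ P.comap T, ?_, fun x ⟨hxS, hxP⟩ => ?_⟩
  · rw [← Module.finrank_fintype_fun_eq_card ℂ]
    exact Submodule.finrank_add_finrank_le_finrank_inf_comap_add _ _ _
  have h := polyForm_eq_re_jForm_eigenScale hA hv (α := -α) (β := -β) (γ := -γ)
    (f := fun t => √(-(α + β * t + γ * t ^ 2)))
    (fun t ht => by rw [Real.sq_sqrt (neg_nonneg.2 (hS t ht))]; ring) hxS
  rw [polyForm_neg, ← hT] at h
  linarith [hP _ hxP]

end Spectral

lemma exists_real_eigenbasis {N : ℕ} {A : Matrix (Fin N) (Fin N) ℂ} (hd : Diagonalizable A)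
    (hr : spectrum ℂ A ⊆ Set.range Complex.ofReal) :
    ∃ (v : Module.Basis (Fin N) ℂ (Fin N → ℂ)) (d : Fin N → ℝ),
      ∀ i, A *ᵥ v i = (d i : ℂ) • v i := by
  obtain ⟨P, D, hP, hD, rfl⟩ := hd
  let v := (Pi.basisFun ℂ (Fin N)).map (P.toLinearEquiv' (P.invertibleOfIsUnitDet hP))
  have hv : ∀ i, (P * D * P⁻¹) *ᵥ v i = D i i • v i := fun i => by
    have hvi : v i = P *ᵥ Pi.single i 1 := by
      simp only [v, Module.Basis.map_apply, Pi.basisFun_apply]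
      rfl
    have hDi : D *ᵥ Pi.single i 1 = D i i • Pi.single i 1 := by
      ext j
      rw [mulVec_single_one, Pi.smul_apply, Pi.single_apply]
      split_ifs with h
      · simp [h]
      · simp [hD h]
    rw [hvi, mulVec_mulVec, Matrix.mul_assoc, nonsing_inv_mul P hP, Matrix.mul_one,
      ← mulVec_mulVec, hDi, mulVec_smul]
  have hreal : ∀ i, ∃ r : ℝ, (r : ℂ) = D i i := fun i => by
    have h : Module.End.HasEigenvalue (toLin' (P * D * P⁻¹)) (D i i) :=
      Module.End.hasEigenvalue_of_hasEigenvector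
        ⟨by rw [Module.End.mem_eigenspace_iff, toLin'_apply, hv], v.ne_zero i⟩
    exact hr (spectrum_toLin' (P * D * P⁻¹) ▸ h.mem_spectrum)
  choose d hd using hreal
  exact ⟨v, d, fun i => by rw [hd, hv]⟩

theorem eigCount_le_eigCount_add {N : ℕ} {J A₁ A₂ : Matrix (Fin N) (Fin N) ℂ}
    (hJinv : IsUnit J.det) (hJ : J.IsHermitian)
    (hA₁ : J * A₁ = A₁ᴴ * J) (hA₂ : J * A₂ = A₂ᴴ * J)
    (hd₁ : Diagonalizable A₁) (hd₂ : Diagonalizable A₂)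
    (hr₁ : spectrum ℂ A₁ ⊆ Set.range Complex.ofReal)
    (hr₂ : spectrum ℂ A₂ ⊆ Set.range Complex.ofReal)
    {Δ : Set ℝ} {α β γ : ℝ} (hp : ∀ t, 0 < α + β * t + γ * t ^ 2 ↔ t ∈ Δ) :
    eigCount A₁ Δ ≤ eigCount A₂ Δ + (N - Module.finrank ℂ (LinearMap.ker (toLin' (A₁ - A₂))))
      + 2 * #{i | hJ.eigenvalues i < 0} := by
  obtain ⟨P, hPdim, hPpos⟩ := exists_posDef_subspace hJinv hJ
  have hPnonneg : ∀ x ∈ P, 0 ≤ (jForm J x x).re := fun x hx => by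
    rcases eq_or_ne x 0 with rfl | hx0
    · simp
    · exact (hPpos x hx hx0).le
  obtain ⟨v₁, d₁, hv₁⟩ := exists_real_eigenbasis hd₁ hr₁
  obtain ⟨v₂, d₂, hv₂⟩ := exists_real_eigenbasis hd₂ hr₂
  obtain ⟨W₁, hW₁dim, hW₁pos⟩ := exists_polyForm_pos_subspace hA₁ hv₁ hPpos (S := Δ)
    fun t ht => (hp t).2 ht
  obtain ⟨W₂, hW₂dim, hW₂nonpos⟩ := exists_polyForm_nonpos_subspace hA₂ hv₂ hPnonneg (S := Δᶜ)
    fun t ht => not_lt.1 (mt (hp t).1 ht)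
  set K := LinearMap.ker (toLin' (A₁ - A₂))
  have hW : W₁ ⊓ W₂ ⊓ K = ⊥ := by
    refine eq_bot_iff.2 fun x ⟨⟨hx₁, hx₂⟩, hxK⟩ => (Submodule.mem_bot ℂ).2 ?_
    by_contra hx0
    have hAx : A₁ *ᵥ x = A₂ *ᵥ x := by simpa [K, sub_mulVec, sub_eq_zero] using hxK
    have h₁ := hW₁pos x hx₁ hx0
    have h₂ := hW₂nonpos x hx₂
    rw [← polyForm_eq_of_mulVec_eq α β γ hAx] at h₂
    linarith
  have hdim := Submodule.finrank_add_finrank_add_finrank_le_of_inf_eq_bot hW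
  have hcompl := finrank_spectralSubspace_add_finrank_compl hv₂ Δ
  have hK := K.finrank_le
  simp only [Module.finrank_fin_fun, Fintype.card_fin] at hPdim hW₁dim hW₂dim hdim hcompl hK
  change Module.finrank ℂ (spectralSubspace A₁ Δ)
    ≤ Module.finrank ℂ (spectralSubspace A₂ Δ) + (N - Module.finrank ℂ K) + _
  omega

end IndefiniteForm

theorem stmt9 {N : ℕ} (J A₁ A₂ : Matrix (Fin N) (Fin N) ℂ)
    (hJinv : IsUnit J.det) (hJ : J.IsHermitian) (κ : ℕ)
    (hκ : (Finset.univ.filter fun i => hJ.eigenvalues i < 0).card = κ)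
    (hA₁ : J * A₁ = A₁ᴴ * J) (hA₂ : J * A₂ = A₂ᴴ * J)
    (hd₁ : Diagonalizable A₁) (hd₂ : Diagonalizable A₂)
    (hr₁ : spectrum ℂ A₁ ⊆ Set.range (Complex.ofReal))
    (hr₂ : spectrum ℂ A₂ ⊆ Set.range (Complex.ofReal))
    (n : ℕ)
    (hn : N - Module.finrank ℂ (LinearMap.ker (Matrix.toLin' (A₁ - A₂))) = n)
    (Δ : Set ℝ) (hΔopen : IsOpen Δ) (hΔconn : Δ.OrdConnected) :
    |(eigCount A₁ Δ : ℤ) - eigCount A₂ Δ| ≤ n + 2 * κ := by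
  obtain ⟨α, β, γ, hp⟩ := exists_quadratic_pos_iff_mem hΔopen hΔconn
  have h₁ := IndefiniteForm.eigCount_le_eigCount_add hJinv hJ hA₁ hA₂ hd₁ hd₂ hr₁ hr₂ hp
  have h₂ := IndefiniteForm.eigCount_le_eigCount_add hJinv hJ hA₂ hA₁ hd₂ hd₁ hr₂ hr₁ hp
  rw [← neg_sub, map_neg, LinearMap.ker_neg] at h₂
  rw [abs_sub_le_iff]
  constructor <;> omega
end
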